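/- arXiv:2508.17159 — 9 statements merged into one kernel-verified Lean document; each statement's English description precedes it below -/
import Mathlib

section
/- (Shadowing property of T.) For every ε > 0 there exists δ > 0 such that for every δ-pseudo orbit (x_k)_{k∈ℕ} of T there exists y ∈ [0,∞) with |T^k(y) − x_k| < ε for all k ∈ ℕ. -/
/-!
On `[n, n + 1]` the map `T` is affine with slope `±Tslope n`, where `Tslope n = 4 ^ ℓ(m) + 1`
for the odd endpoint `m` is odd and at least `5`, and it maps `[n, n + 1]` onto `[0, Tslope n]`.
A `δ`-pseudo orbit can overshoot `Tslope n` by less than `δ`; as `T` is symmetric about every odd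
integer, reflecting such a point in `Tslope n` yields a `3δ`-pseudo orbit `z`, `2δ`-close to the
original one, with `z k` in an interval `[n_k, n_k + 1]` such that
`[n_{k+1}, n_{k+1} + 1] ⊆ T [n_k, n_k + 1]`. By compactness some true orbit visits these intervals
in order, and expansion by at least `5` gives `5 d_k ≤ d_{k+1} + 3δ` for its distances `d_k ≤ 1`
to `z`, hence `d_k ≤ 3δ/4`.
-/

open Set Filter

noncomputable section

/-- `ell n = min {k ∈ ℤ⁺ : n ≤ 4^k}`. -/
def ell (n : ℕ) : ℕ := sInf {k : ℕ | 1 ≤ k ∧ n ≤ 4 ^ k}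

/-- The value of the map `T` at the nonnegative integer `n`:
`0` if `n` is even and `4 ^ ℓ(n) + 1` if `n` is odd. -/
def Tval (n : ℕ) : ℝ := if Even n then 0 else 4 ^ ell n + 1

/-- `T : [0,∞) → [0,∞)` is the unique continuous map which is affine on each
integer interval `[n-1, n]` and takes the value `Tval n` at every nonnegative
integer `n`.  This is expressed by linear interpolation on each `[n, n+1]`. -/
def IsT (T : ℝ → ℝ) : Prop :=
  ∀ n : ℕ, ∀ x ∈ Set.Icc (n : ℝ) (n + 1),
    T x = ((n : ℝ) + 1 - x) * Tval n + (x - (n : ℝ)) * Tval (n + 1)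

/-- `(x_k)` is a `δ`-pseudo orbit of `T` in `[0,∞)`. -/
def IsPseudoOrbit (T : ℝ → ℝ) (δ : ℝ) (x : ℕ → ℝ) : Prop :=
  (∀ k, 0 ≤ x k) ∧ ∀ k, |x (k + 1) - T (x k)| < δ

section Itinerary

variable {X : Type*} {f : X → X} {I : ℕ → Set X}

theorem exists_iterate_mem_of_subset_image (hI : ∀ k, I (k + 1) ⊆ f '' I k) (N : ℕ) :
    ∀ z ∈ I N, ∃ y, (∀ j ≤ N, f^[j] y ∈ I j) ∧ f^[N] y = z := by
  induction N generalizing I with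
  | zero => exact fun z hz => ⟨z, fun j hj => by rwa [Nat.le_zero.1 hj], rfl⟩
  | succ N ih =>
    intro z hz
    obtain ⟨y', hy', rfl⟩ := ih (I := fun k => I (k + 1)) (fun k => hI (k + 1)) z hz
    obtain ⟨y, hy, rfl⟩ := hI 0 (hy' 0 N.zero_le)
    refine ⟨y, fun j hj => ?_, (Function.iterate_succ_apply f N y).symm⟩
    rcases j with _ | j
    · exact hy
    · simpa only [Function.iterate_succ_apply] using hy' j (by omega)

variable [TopologicalSpace X]

theorem continuousOn_iterate_of_iterate_mem (hc : ∀ k, ContinuousOn f (I k)) (N : ℕ) :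
    ContinuousOn f^[N] {y | ∀ j < N, f^[j] y ∈ I j} := by
  induction N with
  | zero => exact continuousOn_id
  | succ N ih =>
    rw [Function.iterate_succ']
    exact (hc N).comp (ih.mono fun y hy j hj => hy j (by omega)) fun y hy => hy N N.lt_succ_self

theorem isClosed_setOf_iterate_mem (hc : ∀ k, ContinuousOn f (I k)) (hcl : ∀ k, IsClosed (I k))
    (N : ℕ) : IsClosed {y | ∀ j ≤ N, f^[j] y ∈ I j} := by
  induction N with
  | zero => simpa only [Nat.le_zero, forall_eq, Function.iterate_zero, id_eq, ofPred_mem_eq]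
      using hcl 0
  | succ N ih =>
    have hsub : {y | ∀ j ≤ N, f^[j] y ∈ I j} ⊆ {y | ∀ j < N + 1, f^[j] y ∈ I j} :=
      fun y hy j hj => hy j (by omega)
    have h := ((continuousOn_iterate_of_iterate_mem hc (N + 1)).mono hsub
      ).preimage_isClosed_of_isClosed ih (hcl (N + 1))
    convert h using 1
    ext y
    simp only [mem_ofPred_eq, mem_inter_iff, mem_preimage, Nat.le_succ_iff_eq_or_le]
    constructor
    · exact fun hy => ⟨fun j hj => hy j (Or.inr hj), hy _ (Or.inl rfl)⟩
    · rintro ⟨hy, hN⟩ j (rfl | hj)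
      exacts [hN, hy j hj]

theorem exists_forall_iterate_mem [T2Space X] (hcpt : ∀ k, IsCompact (I k))
    (hne : ∀ k, (I k).Nonempty) (hc : ∀ k, ContinuousOn f (I k))
    (hI : ∀ k, I (k + 1) ⊆ f '' I k) : ∃ y, ∀ k, f^[k] y ∈ I k := by
  have hcl k := (hcpt k).isClosed
  obtain ⟨y, hy⟩ := IsCompact.nonempty_iInter_of_sequence_nonempty_isCompact_isClosed
    (fun N => {y | ∀ j ≤ N, f^[j] y ∈ I j}) (fun N y hy j hj => hy j (by omega))
    (fun N => (hne N).elim fun z hz =>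
      (exists_iterate_mem_of_subset_image hI N z hz).elim fun y hy => ⟨y, hy.1⟩)
    ((hcpt 0).of_isClosed_subset (isClosed_setOf_iterate_mem hc hcl 0) fun y hy => hy 0 le_rfl)
    (isClosed_setOf_iterate_mem hc hcl)
  exact ⟨y, fun k => mem_iInter.1 hy k k le_rfl⟩

end Itinerary

theorem le_div_sub_one_of_mul_le_succ_add {d : ℕ → ℝ} {r c : ℝ} (hr : 1 < r)
    (hd : BddAbove (range d)) (h : ∀ j, r * d j ≤ d (j + 1) + c) (j : ℕ) :
    d j ≤ c / (r - 1) := by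
  have hsup : r * ⨆ i, d i ≤ (⨆ i, d i) + c := by
    rw [← le_div_iff₀' (by linarith)]
    exact ciSup_le fun i => by
      rw [le_div_iff₀' (by linarith)]
      linarith [h i, le_ciSup hd (i + 1)]
  rw [le_div_iff₀ (by linarith)]
  nlinarith [le_ciSup hd j]

lemma one_le_ell (n : ℕ) : 1 ≤ ell n :=
  (Nat.sInf_mem (s := {k | 1 ≤ k ∧ n ≤ 4 ^ k}) ⟨n + 1, by omega,
    by have := Nat.lt_pow_self (n := n + 1) (by norm_num : 1 < 4); omega⟩).1

def Tslope (n : ℕ) : ℕ := 4 ^ ell (if Even n then n + 1 else n) + 1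

lemma five_le_Tslope (n : ℕ) : 5 ≤ Tslope n := by
  have := Nat.pow_le_pow_right (by norm_num : 0 < 4) (one_le_ell (if Even n then n + 1 else n))
  unfold Tslope; omega

lemma odd_Tslope (n : ℕ) : Odd (Tslope n) :=
  (Nat.even_pow.2 ⟨even_two_mul 2, Nat.one_le_iff_ne_zero.1 (one_le_ell _)⟩).add_one

lemma Tval_cases (n : ℕ) :
    Tval n = 0 ∧ Tval (n + 1) = Tslope n ∨ Tval n = Tslope n ∧ Tval (n + 1) = 0 := by
  by_cases h : Even n
  · left; simp [Tval, Tslope, h, Nat.even_add_one]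
  · right; simp [Tval, Tslope, h, Nat.even_add_one]

lemma abs_Tval_succ_sub_Tval (n : ℕ) : |Tval (n + 1) - Tval n| = Tslope n := by
  rcases Tval_cases n with ⟨h0, h1⟩ | ⟨h0, h1⟩ <;> simp [h0, h1]

def reflect (i : ℕ) (v : ℝ) : ℝ := i + 1 - |v - (i + 1)|

lemma reflect_eq_self {i : ℕ} {v : ℝ} (h : v ≤ i + 1) : reflect i v = v := by
  rw [reflect, abs_of_nonpos (by linarith)]; ring

lemma mem_Icc_floor {v : ℝ} (hv : 0 ≤ v) : v ∈ Icc (⌊v⌋₊ : ℝ) (⌊v⌋₊ + 1) :=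
  ⟨Nat.floor_le hv, (Nat.lt_floor_add_one v).le⟩

-- Points beyond `Tslope` go to `[Tslope - 1, Tslope]`, where `reflect` folds them back.
def itinerary (x : ℕ → ℝ) : ℕ → ℕ
  | 0 => ⌊x 0⌋₊
  | k + 1 => min ⌊x (k + 1)⌋₊ (Tslope (itinerary x k) - 1)

def foldedOrbit (x : ℕ → ℝ) (k : ℕ) : ℝ := reflect (itinerary x k) (x k)

lemma itinerary_succ_add_one_le (x : ℕ → ℝ) (k : ℕ) :
    itinerary x (k + 1) + 1 ≤ Tslope (itinerary x k) := by
  have := five_le_Tslope (itinerary x k)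
  simp only [itinerary]
  omega

namespace IsT

variable {T : ℝ → ℝ} (hT : IsT T)
include hT

lemma apply_natCast (n : ℕ) : T n = Tval n := by
  simpa using hT n n ⟨le_rfl, by linarith⟩

lemma apply_natCast_add_one (n : ℕ) : T (n + 1) = Tval (n + 1) := by
  simpa using hT n (n + 1) ⟨by linarith, le_rfl⟩

lemma continuousOn_Icc (n : ℕ) : ContinuousOn T (Icc n (n + 1)) :=
  ContinuousOn.congr (by fun_prop) (hT n)

lemma Icc_Tslope_subset_image (n : ℕ) : Icc 0 (Tslope n : ℝ) ⊆ T '' Icc n (n + 1) := by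
  have hn : uIcc (n : ℝ) (n + 1) = Icc (n : ℝ) (n + 1) := uIcc_of_le (by linarith)
  have h := intermediate_value_uIcc (hn ▸ hT.continuousOn_Icc n)
  rw [hn, hT.apply_natCast, hT.apply_natCast_add_one] at h
  rcases Tval_cases n with ⟨h0, h1⟩ | ⟨h0, h1⟩ <;> rw [h0, h1] at h
  · simpa using h
  · simpa [uIcc_comm] using h

lemma mem_Icc_Tslope {n : ℕ} {u : ℝ} (hu : u ∈ Icc (n : ℝ) (n + 1)) :
    T u ∈ Icc 0 (Tslope n : ℝ) := by
  rw [hT n u hu]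
  rcases Tval_cases n with ⟨h0, h1⟩ | ⟨h0, h1⟩ <;> rw [h0, h1] <;>
    constructor <;> nlinarith [hu.1, hu.2, (Tslope n).cast_nonneg (α := ℝ)]

lemma abs_sub_eq {n : ℕ} {u w : ℝ} (hu : u ∈ Icc (n : ℝ) (n + 1))
    (hw : w ∈ Icc (n : ℝ) (n + 1)) : |T u - T w| = Tslope n * |u - w| := by
  rw [hT n u hu, hT n w hw, ← abs_Tval_succ_sub_Tval, ← abs_mul]
  congr 1
  ring

lemma apply_add_eq_apply_sub {m : ℕ} (hm : Odd m) {t : ℝ} (ht0 : 0 ≤ t) (ht1 : t ≤ 1) :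
    T (m + t) = T (m - t) := by
  obtain ⟨k, rfl⟩ := hm
  have hk : Even (2 * k) := even_two_mul k
  have h1 := hT (2 * k + 1) (↑(2 * k + 1) + t) (by push_cast; constructor <;> linarith)
  have h2 := hT (2 * k) (↑(2 * k + 1) - t) (by push_cast; constructor <;> linarith)
  rw [h1, h2]
  simp only [Tval, hk, Nat.even_add_one, not_true, if_true, if_false, not_false_eq_true]
  push_cast; ring

lemma reflect_min_floor_spec {m i : ℕ} (hm : Odd m) {v δ : ℝ} (hv : 0 ≤ v) (hδ0 : 0 ≤ δ)
    (hδ1 : δ ≤ 1) (hvm : v < m + δ) (hi : i = min ⌊v⌋₊ (m - 1)) :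
    reflect i v ∈ Icc (i : ℝ) (i + 1) ∧ |reflect i v - v| ≤ 2 * δ ∧ T (reflect i v) = T v := by
  subst hi
  have hm0 : 1 ≤ m := hm.pos
  by_cases hfloor : ⌊v⌋₊ < m
  · rw [min_eq_left (by omega), reflect_eq_self (Nat.lt_floor_add_one v).le, sub_self, abs_zero]
    exact ⟨mem_Icc_floor hv, by linarith, rfl⟩
  · have hm1 : ((m - 1 : ℕ) : ℝ) + 1 = m := by push_cast [Nat.cast_sub hm0]; ring
    have hmv : (m : ℝ) ≤ v := (Nat.cast_le.2 (not_lt.1 hfloor)).trans (Nat.floor_le hv)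
    rw [min_eq_right (by omega), reflect, hm1, abs_of_nonneg (by linarith)]
    refine ⟨⟨by linarith, by linarith⟩, by rw [abs_of_nonpos] <;> linarith, ?_⟩
    convert (hT.apply_add_eq_apply_sub hm (t := v - m) (by linarith) (by linarith)).symm
      using 2
    ring

lemma foldedOrbit_spec {δ : ℝ} {x : ℕ → ℝ} (hx : IsPseudoOrbit T δ x) (hδ : δ ≤ 1) (k : ℕ) :
    foldedOrbit x k ∈ Icc (itinerary x k : ℝ) (itinerary x k + 1) ∧
      |foldedOrbit x k - x k| ≤ 2 * δ ∧ T (foldedOrbit x k) = T (x k) := by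
  have hδ0 : 0 ≤ δ := (abs_nonneg _).trans (hx.2 0).le
  induction k with
  | zero =>
    rw [foldedOrbit, itinerary, reflect_eq_self (Nat.lt_floor_add_one _).le, sub_self, abs_zero]
    exact ⟨mem_Icc_floor (hx.1 0), by linarith, rfl⟩
  | succ k ih =>
    have hTx := ih.2.2 ▸ hT.mem_Icc_Tslope ih.1
    have hxk : x (k + 1) < Tslope (itinerary x k) + δ := by
      linarith [(abs_lt.1 (hx.2 k)).2, hTx.2]
    exact hT.reflect_min_floor_spec (odd_Tslope _) (hx.1 _) hδ0 hδ hxk rfl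

lemma abs_foldedOrbit_succ_sub_le {δ : ℝ} {x : ℕ → ℝ} (hx : IsPseudoOrbit T δ x) (hδ : δ ≤ 1)
    (k : ℕ) :
    |foldedOrbit x (k + 1) - T (foldedOrbit x k)| ≤ 3 * δ := by
  rw [(hT.foldedOrbit_spec hx hδ k).2.2]
  calc |foldedOrbit x (k + 1) - T (x k)|
        ≤ |foldedOrbit x (k + 1) - x (k + 1)| + |x (k + 1) - T (x k)| := abs_sub_le _ _ _
    _ ≤ 2 * δ + δ := add_le_add (hT.foldedOrbit_spec hx hδ (k + 1)).2.1 (hx.2 k).le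
    _ = 3 * δ := by ring

lemma abs_iterate_sub_le {n : ℕ → ℕ} {z : ℕ → ℝ} {y c : ℝ}
    (hz : ∀ k, z k ∈ Icc (n k : ℝ) (n k + 1)) (hy : ∀ k, T^[k] y ∈ Icc (n k : ℝ) (n k + 1))
    (hc : ∀ k, |z (k + 1) - T (z k)| ≤ c) (k : ℕ) : |T^[k] y - z k| ≤ c / 4 := by
  have hbdd : BddAbove (range fun k => |T^[k] y - z k|) := by
    refine ⟨1, ?_⟩
    rintro _ ⟨j, rfl⟩
    exact abs_sub_le_iff.2 ⟨by linarith [(hy j).2, (hz j).1], by linarith [(hy j).1, (hz j).2]⟩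
  have hstep (j : ℕ) : 5 * |T^[j] y - z j| ≤ |T^[j + 1] y - z (j + 1)| + c :=
    calc 5 * |T^[j] y - z j| ≤ Tslope (n j) * |T^[j] y - z j| :=
          mul_le_mul_of_nonneg_right (by exact_mod_cast five_le_Tslope _) (abs_nonneg _)
      _ = |T^[j + 1] y - T (z j)| := by
          rw [Function.iterate_succ_apply', hT.abs_sub_eq (hy j) (hz j)]
      _ ≤ |T^[j + 1] y - z (j + 1)| + |z (j + 1) - T (z j)| := abs_sub_le _ _ _
      _ ≤ |T^[j + 1] y - z (j + 1)| + c := by linarith [hc j]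
  have h := le_div_sub_one_of_mul_le_succ_add (by norm_num : (1 : ℝ) < 5) hbdd hstep k
  norm_num at h
  exact h

end IsT

/-- Shadowing property of `T`: for every `ε > 0` there exists `δ > 0` such that
every `δ`-pseudo orbit of `T` is `ε`-shadowed by a true orbit. -/
theorem shadowing_property (T : ℝ → ℝ) (hT : IsT T) :
    ∀ ε > (0 : ℝ), ∃ δ > (0 : ℝ), ∀ x : ℕ → ℝ, IsPseudoOrbit T δ x →
      ∃ y : ℝ, 0 ≤ y ∧ ∀ k : ℕ, |T^[k] y - x k| < ε := by
  intro ε hε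
  refine ⟨min (ε / 3) 1, by positivity, fun x hx => ?_⟩
  set δ := min (ε / 3) 1
  have hδ1 : δ ≤ 1 := min_le_right _ _
  have hδε : δ ≤ ε / 3 := min_le_left _ _
  obtain ⟨y, hy⟩ := exists_forall_iterate_mem (f := T)
    (I := fun k => Icc (itinerary x k : ℝ) (itinerary x k + 1)) (fun _ => isCompact_Icc)
    (fun _ => nonempty_Icc.2 (by linarith)) (fun _ => hT.continuousOn_Icc _) fun k =>
      (Icc_subset_Icc (Nat.cast_nonneg _) (by exact_mod_cast itinerary_succ_add_one_le x k)).trans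
        (hT.Icc_Tslope_subset_image _)
  refine ⟨y, (Nat.cast_nonneg _).trans (hy 0).1, fun k => ?_⟩
  calc |T^[k] y - x k| ≤ |T^[k] y - foldedOrbit x k| + |foldedOrbit x k - x k| := abs_sub_le _ _ _
    _ ≤ 3 * δ / 4 + 2 * δ := add_le_add
        (hT.abs_iterate_sub_le (fun k => (hT.foldedOrbit_spec hx hδ1 k).1) hy
          (hT.abs_foldedOrbit_succ_sub_le hx hδ1) k)
        (hT.foldedOrbit_spec hx hδ1 k).2.1
    _ < ε := by linarith
end
end

section
/- Let 0 < δ < 1/4 and let (x_n)_{n∈ℕ} be a δ-pseudo orbit of T. For each n ∈ ℕ let j_n be the smallest positive integer with T(x_n) ∈ [j_n − 1, j_n]. Then for every y ∈ ⋂_{k=0}^∞ T^{−k}([j_k − 1, j_k]) one has |T^k(y) − T(x_k)| ≤ 20δ for all k ∈ ℕ. -/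
open Set Filter

noncomputable section

/-! On each lap `[i, i + 1]` the map `T` is affine with absolute slope at least `5`, and the
slope of the next lap is at most `4` times larger. If `a` and `T x_k` lie in the same lap and
`b = x_{k+1}` is `δ`-close to `T x_k`, comparing `T a` and `T b` with `T c` at the endpoint `c`
of the lap that separates `a` from `b` gives `5 |a - b| ≤ |T a - T b| + 25 δ`. Hence the errors
`e_k = |T^k y - T x_k|`, which are at most `1` because both points lie in `[j_k - 1, j_k]`, satisfy
`5 e_k ≤ e_{k+1} + 30 δ`, and a bounded sequence expanding like this stays below `30 δ / 4`. -/

lemma ell_spec (n : ℕ) : 1 ≤ ell n ∧ n ≤ 4 ^ ell n :=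
  Nat.sInf_mem (s := {k | 1 ≤ k ∧ n ≤ 4 ^ k}) ⟨n + 1, by omega,
    (Nat.lt_pow_self (by norm_num)).le.trans (Nat.pow_le_pow_right (by norm_num) n.le_succ)⟩

lemma ell_le {n k : ℕ} (hk : 1 ≤ k) (hn : n ≤ 4 ^ k) : ell n ≤ k :=
  Nat.sInf_le ⟨hk, hn⟩

lemma ell_mono : Monotone ell := fun _ n h =>
  ell_le (ell_spec n).1 (h.trans (ell_spec n).2)

lemma ell_add_two_le (n : ℕ) : ell (n + 2) ≤ ell n + 1 := by
  refine ell_le (by omega) ?_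
  have hpos : 0 < 4 ^ ell n := Nat.pow_pos (by norm_num)
  rw [pow_succ]
  linarith [(ell_spec n).2]

lemma Tval_of_even {n : ℕ} (hn : Even n) : Tval n = 0 := if_pos hn

lemma Tval_of_odd {n : ℕ} (hn : Odd n) : Tval n = 4 ^ ell n + 1 :=
  if_neg (Nat.not_even_iff_odd.mpr hn)

lemma Tval_nonneg (n : ℕ) : 0 ≤ Tval n := by
  unfold Tval; split_ifs <;> positivity

lemma five_le_Tval_of_odd {n : ℕ} (hn : Odd n) : 5 ≤ Tval n := by
  have h4 : (4 : ℝ) ≤ 4 ^ ell n := le_self_pow₀ (by norm_num) (by linarith [(ell_spec n).1])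
  rw [Tval_of_odd hn]
  linarith

lemma Tval_le_Tval_add_two (n : ℕ) : Tval n ≤ Tval (n + 2) := by
  rcases Nat.even_or_odd n with hn | hn
  · rw [Tval_of_even hn]; exact Tval_nonneg _
  · rw [Tval_of_odd hn, Tval_of_odd (hn.add_even even_two)]
    gcongr
    · norm_num
    · exact ell_mono (by omega)

lemma Tval_add_two_le (n : ℕ) : Tval (n + 2) ≤ 4 * Tval n := by
  rcases Nat.even_or_odd n with hn | hn
  · rw [Tval_of_even hn, Tval_of_even (hn.add even_two), mul_zero]
  · rw [Tval_of_odd hn, Tval_of_odd (hn.add_even even_two)]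
    have h : (4 : ℝ) ^ ell (n + 2) ≤ 4 ^ (ell n + 1) :=
      pow_le_pow_right₀ (by norm_num) (ell_add_two_le n)
    rw [pow_succ] at h
    linarith

/-- The absolute slope of `T` on the lap `[i, i + 1]`: one of `Tval i`, `Tval (i + 1)` is `0`. -/
def lapSlope (i : ℕ) : ℝ := Tval i + Tval (i + 1)

lemma abs_Tval_succ_sub (i : ℕ) : |Tval (i + 1) - Tval i| = lapSlope i := by
  rcases Nat.even_or_odd i with hi | hi
  · rw [lapSlope, Tval_of_even hi, sub_zero, zero_add, abs_of_nonneg (Tval_nonneg _)]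
  · rw [lapSlope, Tval_of_even hi.add_one, zero_sub, add_zero, abs_neg,
      abs_of_nonneg (Tval_nonneg _)]

lemma five_le_lapSlope (i : ℕ) : 5 ≤ lapSlope i := by
  unfold lapSlope
  rcases Nat.even_or_odd i with hi | hi
  · linarith [Tval_nonneg i, five_le_Tval_of_odd hi.add_one]
  · linarith [Tval_nonneg (i + 1), five_le_Tval_of_odd hi]

lemma lapSlope_le_lapSlope_succ (i : ℕ) : lapSlope i ≤ lapSlope (i + 1) := by
  unfold lapSlope; linarith [Tval_le_Tval_add_two i]

lemma lapSlope_succ_le (i : ℕ) : lapSlope (i + 1) ≤ 4 * lapSlope i := by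
  unfold lapSlope; linarith [Tval_add_two_le i, Tval_nonneg (i + 1)]

lemma IsT.abs_sub_eq_s2 {T : ℝ → ℝ} (hT : IsT T) {i : ℕ} {u v : ℝ}
    (hu : u ∈ Icc (i : ℝ) (i + 1)) (hv : v ∈ Icc (i : ℝ) (i + 1)) :
    |T u - T v| = lapSlope i * |u - v| := by
  rw [hT i u hu, hT i v hv, ← abs_Tval_succ_sub, ← abs_mul]
  ring_nf

lemma five_mul_abs_sub_le_of_pivot {f : ℝ → ℝ} {a b c sa sb δ : ℝ} (hsa : 5 ≤ sa)
    (hsb : sb ≤ 4 * sa) (ha : |f a - f c| = sa * |a - c|) (hb : |f b - f c| = sb * |b - c|)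
    (hbc : |b - c| ≤ δ) : 5 * |a - b| ≤ |f a - f b| + 25 * δ := by
  have hfb : |f b - f c| ≤ 4 * sa * δ :=
    hb ▸ (mul_le_mul_of_nonneg_right hsb (abs_nonneg _)).trans
      (mul_le_mul_of_nonneg_left hbc (by linarith))
  have hfab : sa * (|a - c| - 4 * δ) ≤ |f a - f b| := by
    have := abs_sub_abs_le_abs_sub (f a - f c) (f b - f c)
    rw [sub_sub_sub_cancel_right] at this
    linarith
  have hac : 5 * (|a - c| - 4 * δ) ≤ |f a - f b| := by
    rcases le_total 0 (|a - c| - 4 * δ) with h | h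
    · exact (mul_le_mul_of_nonneg_right hsa h).trans hfab
    · linarith [abs_nonneg (f a - f b)]
  linarith [abs_sub_le a c b, abs_sub_comm b c]

lemma IsT.five_mul_abs_sub_le {T : ℝ → ℝ} (hT : IsT T) {i : ℕ} {a t b δ : ℝ}
    (ha : a ∈ Icc (i : ℝ) (i + 1)) (ht : t ∈ Icc (i : ℝ) (i + 1)) (hb : 0 ≤ b)
    (hbt : |b - t| < δ) (hδ : δ ≤ 1) : 5 * |a - b| ≤ |T a - T b| + 25 * δ := by
  obtain ⟨hbt₁, hbt₂⟩ := abs_lt.mp hbt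
  obtain ⟨ht₁, ht₂⟩ := ht
  rcases lt_or_ge b i with hbi | hbi
  · obtain ⟨i', rfl⟩ := Nat.exists_eq_add_one.mpr (by exact_mod_cast hb.trans_lt hbi)
    push_cast at ha hbi ht₁ ⊢
    have hc : (i' : ℝ) + 1 ∈ Icc (i' : ℝ) (i' + 1) := ⟨by linarith, le_rfl⟩
    refine five_mul_abs_sub_le_of_pivot (five_le_lapSlope (i' + 1))
      ((lapSlope_le_lapSlope_succ i').trans (by linarith [five_le_lapSlope (i' + 1)]))
      (hT.abs_sub_eq_s2 (by exact_mod_cast ha) (by push_cast; exact ⟨le_rfl, by linarith⟩))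
      (hT.abs_sub_eq_s2 ⟨by linarith, by linarith⟩ hc) ?_
    rw [abs_of_neg (by linarith)]
    linarith
  rcases le_or_gt b (i + 1) with hbi' | hbi'
  · refine five_mul_abs_sub_le_of_pivot (five_le_lapSlope i) (by linarith [five_le_lapSlope i])
      (hT.abs_sub_eq_s2 ha ⟨hbi, hbi'⟩) (by simp) ?_
    rw [sub_self, abs_zero]
    exact (abs_nonneg _).trans hbt.le
  · have hc : ((i + 1 : ℕ) : ℝ) ∈ Icc ((i + 1 : ℕ) : ℝ) ((i + 1 : ℕ) + 1) :=
      ⟨le_rfl, by linarith⟩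
    refine five_mul_abs_sub_le_of_pivot (five_le_lapSlope i) (lapSlope_succ_le i)
      (hT.abs_sub_eq_s2 ha (by push_cast; exact ⟨by linarith, le_rfl⟩))
      (hT.abs_sub_eq_s2 (by push_cast; exact ⟨hbi'.le, by linarith⟩) hc) ?_
    push_cast
    rw [abs_of_pos (by linarith)]
    linarith

lemma le_div_of_forall_mul_le_succ_add {e : ℕ → ℝ} {r B c : ℝ} (hr : 1 < r)
    (hB : ∀ k, e k ≤ B) (he : ∀ k, r * e k ≤ e (k + 1) + c) (k : ℕ) :
    e k ≤ c / (r - 1) := by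
  -- `e k - q` would grow at least like `r ^ m`, contradicting the bound `B`
  set q := c / (r - 1)
  have hq : (r - 1) * q = c := mul_div_cancel₀ c (sub_ne_zero.mpr hr.ne')
  have hstep : ∀ m k, r ^ m * (e k - q) ≤ e (k + m) - q := by
    intro m
    induction m with
    | zero => simp
    | succ m ih =>
      intro k
      calc r ^ (m + 1) * (e k - q) = r ^ m * (r * (e k - q)) := by ring
        _ ≤ r ^ m * (e (k + 1) - q) := by
          gcongr
          linarith [he k]
        _ ≤ e (k + m + 1) - q := by simpa [add_right_comm] using ih (k + 1)
  by_contra! h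
  obtain ⟨m, hm⟩ := pow_unbounded_of_one_lt ((B - q) / (e k - q)) hr
  rw [div_lt_iff₀ (sub_pos.mpr h)] at hm
  linarith [hstep m k, hB (k + m)]

/-- If `0 < δ < 1/4`, `(x n)` is a `δ`-pseudo orbit and `j n` is the smallest
positive integer with `T (x n) ∈ [j n - 1, j n]`, then every point `y` of the
cylinder `⋂ k, T^[k] ⁻¹' [j k - 1, j k]` satisfies
`|T^[k] y - T (x k)| ≤ 20 δ` for all `k`. -/
theorem orbit_20delta_shadows (T : ℝ → ℝ) (hT : IsT T) (δ : ℝ)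
    (hδ0 : 0 < δ) (hδ : δ < 1 / 4) (x : ℕ → ℝ) (hx : IsPseudoOrbit T δ x)
    (j : ℕ → ℕ)
    (hj : ∀ n : ℕ, 1 ≤ j n ∧ T (x n) ∈ Set.Icc ((j n : ℝ) - 1) (j n) ∧
      ∀ m : ℕ, 1 ≤ m → T (x n) ∈ Set.Icc ((m : ℝ) - 1) m → j n ≤ m)
    (y : ℝ) (hy : y ∈ ⋂ k : ℕ, T^[k] ⁻¹' Set.Icc ((j k : ℝ) - 1) (j k)) :
    ∀ k : ℕ, |T^[k] y - T (x k)| ≤ 20 * δ := by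
  simp only [mem_iInter, mem_preimage] at hy
  have hlap : ∀ k, Icc ((j k : ℝ) - 1) (j k) = Icc ((j k - 1 : ℕ) : ℝ) ((j k - 1 : ℕ) + 1) :=
    fun k => by rw [Nat.cast_sub (hj k).1, Nat.cast_one, sub_add_cancel]
  have hbound : ∀ k, |T^[k] y - T (x k)| ≤ 1 := by
    intro k
    simpa [← Real.dist_eq] using Real.dist_le_of_mem_Icc (hy k) (hj k).2.1
  have hstep : ∀ k, 5 * |T^[k] y - T (x k)| ≤ |T^[k + 1] y - T (x (k + 1))| + 30 * δ := by
    intro k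
    have hexpand := hT.five_mul_abs_sub_le (hlap k ▸ hy k) (hlap k ▸ (hj k).2.1)
      (hx.1 (k + 1)) (hx.2 k) (by linarith)
    rw [← Function.iterate_succ_apply' T k y] at hexpand
    linarith [abs_sub_le (T^[k] y) (x (k + 1)) (T (x k)), hx.2 k]
  intro k
  linarith [le_div_of_forall_mul_le_succ_add (by norm_num : (1 : ℝ) < 5) hbound hstep k]
end
end

section
/- For every infinite sequence (i_k)_{k∈ℕ} of positive integers, the set ⋂_{k=0}^∞ T^{−k}([i_k − 1, i_k]) contains at most one point. -/
open Set Filter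

noncomputable section

/-! On each cell `[n, n+1]` the map `T` is affine, and of its two endpoint values one is `0` and the
other is `4 ^ ℓ + 1 ≥ 2`, so `T` stretches distances within a cell by a factor at least `2`. Two
points of the same cylinder have their `k`-th iterates in a common cell of length `1`, so their
distance `d` satisfies `2 ^ k * d ≤ 1` for every `k`, whence `d = 0`. -/

theorem eq_of_iterate_expanding {X : Type*} [MetricSpace X] {f : X → X} {c C : ℝ} (hc : 1 < c)
    {x y : X} (hexp : ∀ k, c * dist (f^[k] x) (f^[k] y) ≤ dist (f^[k + 1] x) (f^[k + 1] y))
    (hbdd : ∀ k, dist (f^[k] x) (f^[k] y) ≤ C) : x = y := by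
  have hpow : ∀ k, c ^ k * dist x y ≤ dist (f^[k] x) (f^[k] y) := by
    intro k
    induction k with
    | zero => simp
    | succ k ih =>
      calc c ^ (k + 1) * dist x y = c * (c ^ k * dist x y) := by ring
        _ ≤ c * dist (f^[k] x) (f^[k] y) := by gcongr
        _ ≤ _ := hexp k
  by_contra hne
  have hpos : 0 < dist x y := dist_pos.mpr hne
  have hunbdd : Tendsto (fun k : ℕ => c ^ k * dist x y) atTop atTop :=
    (tendsto_pow_atTop_atTop_of_one_lt hc).atTop_mul_const hpos
  obtain ⟨k, hk⟩ := (hunbdd.eventually_gt_atTop C).exists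
  exact (hk.trans_le (hpow k)).not_ge (hbdd k)

theorem two_le_Tval_of_not_even {m : ℕ} (hm : ¬ Even m) : 2 ≤ Tval m := by
  rw [Tval, if_neg hm]
  linarith [one_le_pow₀ (by norm_num : (1 : ℝ) ≤ 4) (n := ell m)]

theorem two_le_abs_Tval_succ_sub (n : ℕ) : 2 ≤ |Tval (n + 1) - Tval n| := by
  by_cases hn : Even n
  · have hn' : ¬ Even (n + 1) := by simpa [Nat.even_add_one] using hn
    rw [show Tval n = 0 from if_pos hn, sub_zero]
    exact (two_le_Tval_of_not_even hn').trans (le_abs_self _)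
  · have hn' : Even (n + 1) := Nat.even_add_one.mpr hn
    rw [show Tval (n + 1) = 0 from if_pos hn', zero_sub, abs_neg]
    exact (two_le_Tval_of_not_even hn).trans (le_abs_self _)

theorem IsT.two_mul_dist_le {T : ℝ → ℝ} (hT : IsT T) (n : ℕ) {x y : ℝ}
    (hx : x ∈ Icc (n : ℝ) (n + 1)) (hy : y ∈ Icc (n : ℝ) (n + 1)) :
    2 * dist x y ≤ dist (T x) (T y) := by
  have hslope : T x - T y = (Tval (n + 1) - Tval n) * (x - y) := by
    rw [hT n x hx, hT n y hy]; ring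
  rw [Real.dist_eq, Real.dist_eq, hslope, abs_mul]
  exact mul_le_mul_of_nonneg_right (two_le_abs_Tval_succ_sub n) (abs_nonneg _)

/-- For every infinite sequence of positive integers `(i k)`, the set
`⋂ k, T^{-k}([i k - 1, i k])` contains at most one point. -/
theorem cylinder_subsingleton (T : ℝ → ℝ) (hT : IsT T)
    (i : ℕ → ℕ) (hi : ∀ k, 1 ≤ i k) :
    Set.Subsingleton (⋂ k : ℕ, T^[k] ⁻¹' Set.Icc ((i k : ℝ) - 1) (i k)) := by
  intro x hx y hy
  simp only [mem_iInter, mem_preimage] at hx hy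
  have hcell : ∀ k, ∃ n : ℕ, Icc ((i k : ℝ) - 1) (i k) = Icc (n : ℝ) (n + 1) := fun k => by
    obtain ⟨n, hn⟩ := Nat.exists_eq_add_of_le' (hi k)
    exact ⟨n, by rw [hn]; push_cast; rw [add_sub_cancel_right]⟩
  refine eq_of_iterate_expanding (f := T) (c := 2) (C := 1) one_lt_two (fun k => ?_) (fun k => ?_)
  · obtain ⟨n, hn⟩ := hcell k
    simp only [Function.iterate_succ_apply']
    exact hT.two_mul_dist_le n (hn ▸ hx k) (hn ▸ hy k)
  · exact (Real.dist_le_of_mem_Icc (hx k) (hy k)).trans_eq (sub_sub_cancel _ _)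

end
end

section
/- Let (i_0, …, i_n) be a finite sequence of positive integers such that the cylinder I_{i_0…i_n} = ⋂_{k=0}^n T^{−k}([i_k − 1, i_k]) has nonempty interior, and let k be a positive integer with k ≤ 4^{ℓ(i_n)} + 1. Then λ(I_{i_0…i_n k}) = λ(I_{i_0…i_n}) / (4^{ℓ(i_n)} + 1), where I_{i_0…i_n k} = I_{i_0…i_n} ∩ T^{−(n+1)}([k−1, k]). -/
/-!
On each interval `[j - 1, j]` the map `T` is an affine bijection onto `[0, 4 ^ ℓ(j) + 1]`: for odd
`j` the peak is at `j`, for even `j` it is at the odd point `j - 1`, and `ℓ(j - 1) = ℓ(j)`.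
By induction, `T^[n+1]` maps a cylinder `I_{i₀…iₙ}` with nonempty interior affinely onto
`[0, 4 ^ ℓ(iₙ) + 1]`; a nonempty interior of the next cylinder forces `i_{n+1} ≤ 4 ^ ℓ(iₙ) + 1`, so
`[i_{n+1} - 1, i_{n+1}]` lies inside that range. An affine map scales Lebesgue measure by a constant,
so `I_{i₀…iₙk}` carries the proportion `λ[k - 1, k] / λ[0, 4 ^ ℓ(iₙ) + 1]` of `λ(I_{i₀…iₙ})`.
-/

open Set Filter

noncomputable section

open MeasureTheory Function

lemma ell_add_one_of_odd {j : ℕ} (hj : Odd j) : ell (j + 1) = ell j := by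
  unfold ell
  congr 1
  ext k
  simp only [mem_ofPred_eq, and_congr_right_iff]
  intro hk
  refine ⟨fun h => by omega, fun h => ?_⟩
  have h4k : Even (4 ^ k) := (Nat.even_pow' (by omega)).mpr (by decide)
  rcases h.lt_or_eq with h | h
  · omega
  · exact absurd (h ▸ h4k) (Nat.not_even_iff_odd.mpr hj)

lemma Real.volume_preimage_mul_add {s : ℝ} (hs : s ≠ 0) (c : ℝ) (A : Set ℝ) :
    volume ((fun x => s * x + c) ⁻¹' A) = ENNReal.ofReal |s⁻¹| * volume A := by
  change volume ((s * ·) ⁻¹' ((· + c) ⁻¹' A)) = _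
  rw [Real.volume_preimage_mul_left hs, measure_preimage_add_right]

def AffineOnto (f : ℝ → ℝ) (C D : Set ℝ) : Prop :=
  ∃ s c : ℝ, s ≠ 0 ∧ C = (fun x => s * x + c) ⁻¹' D ∧ EqOn f (fun x => s * x + c) C

namespace AffineOnto

variable {f g : ℝ → ℝ} {C D E : Set ℝ}

lemma congr (h : AffineOnto g C D) (hfg : EqOn f g C) : AffineOnto f C D := by
  obtain ⟨s, c, hs, hC, hg⟩ := h
  exact ⟨s, c, hs, hC, hfg.trans hg⟩

lemma inter_preimage (h : AffineOnto f C D) (E : Set ℝ) :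
    AffineOnto f (C ∩ f ⁻¹' E) (D ∩ E) := by
  obtain ⟨s, c, hs, hC, hf⟩ := h
  refine ⟨s, c, hs, ?_, hf.mono inter_subset_left⟩
  rw [hf.inter_preimage_eq, hC, preimage_inter]

lemma comp (hf : AffineOnto f C D) (hg : AffineOnto g D E) : AffineOnto (g ∘ f) C E := by
  obtain ⟨s, c, hs, hC, hf⟩ := hf
  obtain ⟨t, d, ht, hD, hg⟩ := hg
  refine ⟨t * s, t * c + d, mul_ne_zero ht hs, ?_, fun x hx => ?_⟩
  · rw [hC, hD]
    ext x
    simp only [mem_preimage]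
    ring_nf
  · have hfx : f x ∈ D := by rw [hf hx]; rw [hC] at hx; exact hx
    rw [comp_apply, hg hfx, hf hx]
    ring

lemma exists_volume_eq (h : AffineOnto f C D) :
    ∃ r : ENNReal, ∀ E, volume (C ∩ f ⁻¹' E) = r * volume (D ∩ E) := by
  obtain ⟨s, c, hs, hC, hf⟩ := h
  refine ⟨ENNReal.ofReal |s⁻¹|, fun E => ?_⟩
  rw [hf.inter_preimage_eq, hC, ← preimage_inter, Real.volume_preimage_mul_add hs]

lemma volume_inter_preimage_mul (h : AffineOnto f C D) (E : Set ℝ) :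
    volume (C ∩ f ⁻¹' E) * volume D = volume C * volume (D ∩ E) := by
  obtain ⟨r, hr⟩ := h.exists_volume_eq
  have hC : volume C = r * volume D := by simpa using hr univ
  rw [hr, hC]
  ring

lemma volume_ne_zero (h : AffineOnto f C D) (hC : (interior C).Nonempty) : volume D ≠ 0 := by
  obtain ⟨r, hr⟩ := h.exists_volume_eq
  have hCv : volume C = r * volume D := by simpa using hr univ
  have hpos := (Measure.measure_pos_of_nonempty_interior volume hC).ne'
  rw [hCv] at hpos
  exact right_ne_zero_of_mul hpos

end AffineOnto

lemma affineOnto_interpolation {a p q : ℝ} (hpq : p ≠ q) :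
    AffineOnto (fun x => (a + 1 - x) * p + (x - a) * q) (Icc a (a + 1)) (uIcc p q) := by
  refine ⟨q - p, (a + 1) * p - a * q, sub_ne_zero.mpr hpq.symm, ?_, fun x _ => by ring⟩
  ext x
  simp only [mem_Icc, mem_preimage, mem_uIcc]
  rcases hpq.lt_or_gt with h | h
  · constructor
    · rintro ⟨h₁, h₂⟩
      left; constructor <;> nlinarith
    · rintro (⟨h₁, h₂⟩ | ⟨h₁, h₂⟩) <;> constructor <;> nlinarith
  · constructor
    · rintro ⟨h₁, h₂⟩
      right; constructor <;> nlinarith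
    · rintro (⟨h₁, h₂⟩ | ⟨h₁, h₂⟩) <;> constructor <;> nlinarith

def tentHeight (j : ℕ) : ℕ := 4 ^ ell j + 1

lemma Tval_of_even_s9 {m : ℕ} (hm : Even m) : Tval m = 0 ∧ Tval (m + 1) = tentHeight (m + 1) := by
  simp [Tval, tentHeight, hm, Nat.even_add_one]

lemma Tval_of_odd_s9 {m : ℕ} (hm : Odd m) : Tval m = tentHeight (m + 1) ∧ Tval (m + 1) = 0 := by
  simp [Tval, tentHeight, Nat.not_even_iff_odd.mpr hm, Nat.even_add_one, ell_add_one_of_odd hm]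

lemma Tval_ne_Tval_add_one (m : ℕ) : Tval m ≠ Tval (m + 1) := by
  rcases m.even_or_odd with hm | hm
  · rw [(Tval_of_even_s9 hm).1, (Tval_of_even_s9 hm).2]
    exact (Nat.cast_pos.mpr (Nat.succ_pos _)).ne
  · rw [(Tval_of_odd_s9 hm).1, (Tval_of_odd_s9 hm).2]
    exact (Nat.cast_pos.mpr (Nat.succ_pos _)).ne'

lemma uIcc_Tval (m : ℕ) : uIcc (Tval m) (Tval (m + 1)) = Icc 0 (tentHeight (m + 1) : ℝ) := by
  rcases m.even_or_odd with hm | hm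
  · rw [(Tval_of_even_s9 hm).1, (Tval_of_even_s9 hm).2, uIcc_of_le (Nat.cast_nonneg _)]
  · rw [(Tval_of_odd_s9 hm).1, (Tval_of_odd_s9 hm).2, uIcc_of_ge (Nat.cast_nonneg _)]

lemma IsT.affineOnto_Icc {T : ℝ → ℝ} (hT : IsT T) {j : ℕ} (hj : 1 ≤ j) :
    AffineOnto T (Icc ((j : ℝ) - 1) j) (Icc 0 (tentHeight j : ℝ)) := by
  obtain ⟨m, rfl⟩ : ∃ m, j = m + 1 := ⟨j - 1, by omega⟩
  rw [Nat.cast_succ, add_sub_cancel_right, ← uIcc_Tval]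
  exact (affineOnto_interpolation (Tval_ne_Tval_add_one m)).congr (hT m)

lemma le_of_volume_Icc_inter_Icc_ne_zero {H j : ℕ}
    (h : volume (Icc (0 : ℝ) H ∩ Icc ((j : ℝ) - 1) j) ≠ 0) : j ≤ H := by
  rw [Icc_inter_Icc, Real.volume_Icc, ne_eq, ENNReal.ofReal_eq_zero, not_le, sub_pos,
    lt_inf_iff, max_lt_iff, max_lt_iff] at h
  exact Nat.lt_succ_iff.mp (by exact_mod_cast (show (j : ℝ) < H + 1 by linarith [h.1.2]))

def itineraryCylinder (T : ℝ → ℝ) (i : ℕ → ℕ) (n : ℕ) : Set ℝ :=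
  ⋂ m ∈ Finset.range (n + 1), T^[m] ⁻¹' Icc ((i m : ℝ) - 1) (i m)

lemma itineraryCylinder_zero (T : ℝ → ℝ) (i : ℕ → ℕ) :
    itineraryCylinder T i 0 = Icc ((i 0 : ℝ) - 1) (i 0) := by
  simp [itineraryCylinder]

lemma itineraryCylinder_succ (T : ℝ → ℝ) (i : ℕ → ℕ) (n : ℕ) :
    itineraryCylinder T i (n + 1) =
      itineraryCylinder T i n ∩ T^[n + 1] ⁻¹' Icc ((i (n + 1) : ℝ) - 1) (i (n + 1)) := by
  rw [itineraryCylinder, Finset.range_add_one, Finset.set_biInter_insert, inter_comm]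
  rfl

lemma IsT.affineOnto_itineraryCylinder {T : ℝ → ℝ} (hT : IsT T) {i : ℕ → ℕ} {n : ℕ}
    (hi : ∀ m ≤ n, 1 ≤ i m) (hne : (interior (itineraryCylinder T i n)).Nonempty) :
    AffineOnto T^[n + 1] (itineraryCylinder T i n) (Icc 0 (tentHeight (i n) : ℝ)) := by
  induction n with
  | zero =>
    rw [itineraryCylinder_zero]
    exact hT.affineOnto_Icc (hi 0 le_rfl)
  | succ n ih =>
    rw [itineraryCylinder_succ] at hne ⊢
    have hC := ih (fun m hm => hi m (by omega)) (hne.mono (interior_mono inter_subset_left))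
    have hsucc := hC.inter_preimage (Icc ((i (n + 1) : ℝ) - 1) (i (n + 1)))
    have hj : (i (n + 1) : ℝ) ≤ tentHeight (i n) :=
      mod_cast le_of_volume_Icc_inter_Icc_ne_zero (hsucc.volume_ne_zero hne)
    have hj₀ : (0 : ℝ) ≤ (i (n + 1) : ℝ) - 1 := sub_nonneg.mpr (mod_cast hi (n + 1) le_rfl)
    rw [inter_eq_right.mpr (Icc_subset_Icc hj₀ hj)] at hsucc
    rw [iterate_succ']
    exact hsucc.comp (hT.affineOnto_Icc (hi (n + 1) le_rfl))

/-- If the cylinder `I_{i₀…iₙ}` has nonempty interior and `1 ≤ k ≤ 4^{ℓ(iₙ)}+1`,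
then `λ(I_{i₀…iₙk}) = λ(I_{i₀…iₙ}) / (4^{ℓ(iₙ)} + 1)`. -/
theorem cylinder_measure_ratio (T : ℝ → ℝ) (hT : IsT T) (n : ℕ)
    (i : ℕ → ℕ) (hi : ∀ m : ℕ, m ≤ n → 1 ≤ i m)
    (hne : (interior (⋂ m ∈ Finset.range (n + 1),
      T^[m] ⁻¹' Set.Icc ((i m : ℝ) - 1) (i m))).Nonempty)
    (k : ℕ) (hk1 : 1 ≤ k) (hk : k ≤ 4 ^ ell (i n) + 1) :
    MeasureTheory.volume
        ((⋂ m ∈ Finset.range (n + 1), T^[m] ⁻¹' Set.Icc ((i m : ℝ) - 1) (i m)) ∩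
          T^[n + 1] ⁻¹' Set.Icc ((k : ℝ) - 1) k) =
      MeasureTheory.volume
          (⋂ m ∈ Finset.range (n + 1), T^[m] ⁻¹' Set.Icc ((i m : ℝ) - 1) (i m)) /
        ((4 : ENNReal) ^ ell (i n) + 1) := by
  change volume (itineraryCylinder T i n ∩ _) = volume (itineraryCylinder T i n) / _
  have hk₀ : (0 : ℝ) ≤ (k : ℝ) - 1 := sub_nonneg.mpr (mod_cast hk1)
  have hkH : (k : ℝ) ≤ tentHeight (i n) := mod_cast hk
  have hratio :=
    (hT.affineOnto_itineraryCylinder hi hne).volume_inter_preimage_mul (Icc ((k : ℝ) - 1) k)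
  rw [inter_eq_right.mpr (Icc_subset_Icc hk₀ hkH), Real.volume_Icc, Real.volume_Icc, sub_zero,
    sub_sub_cancel, ENNReal.ofReal_one, mul_one, ENNReal.ofReal_natCast] at hratio
  have hH : ((tentHeight (i n) : ℕ) : ENNReal) = 4 ^ ell (i n) + 1 := by simp [tentHeight]
  rw [ENNReal.eq_div_iff (by positivity) (by finiteness), ← hratio, ← hH, mul_comm]
end
end

section
/- Every non-exceptional x ∈ X whose orbit under f is eventually periodic is rational. -/
/-!
Away from the integers, `f` acts on each orbit point as an integer affine map with slope of
absolute value at least `2`. Composing, `f^[k] x = a x + b` with `a, b ∈ ℤ` and `|a| ≥ 2^k`. If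
`y = f^[m] x` is periodic with period `p`, then `y = A y + B` with `|A| ≥ 2^p > 1`, and substituting
`y = a x + b` leaves a linear equation for `x` with nonzero integer coefficient.
-/

open Set Filter

noncomputable section

/-- `X` is the union of the integer intervals `[n-1, n]` for `n ∈ S`. -/
def UnionOfIntervals (S : Set ℤ) : Set ℝ :=
  ⋃ n ∈ S, Set.Icc ((n : ℝ) - 1) (n : ℝ)

/-- `f` is an integer-affine Markov-type map on `X = ⋃_{n ∈ S} [n-1, n]`: on the
interior of each integer interval of the partition it is given by
`x ↦ a • x + b` with integer coefficients and `|a| ≥ 2`. -/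
def IsPLSystem (S : Set ℤ) (f : ℝ → ℝ) : Prop :=
  S.Nonempty ∧ (∀ x ∈ UnionOfIntervals S, f x ∈ UnionOfIntervals S) ∧
    ∀ n ∈ S, ∃ a b : ℤ, 2 ≤ |a| ∧
      ∀ x ∈ Set.Ioo ((n : ℝ) - 1) (n : ℝ), f x = a * x + b

/-- `x` is non-exceptional: no iterate of `f` at `x` is an integer. -/
def NonExceptional (f : ℝ → ℝ) (x : ℝ) : Prop :=
  ∀ k : ℕ, ∀ m : ℤ, f^[k] x ≠ (m : ℝ)

/-- The orbit of `x` under `f` is eventually periodic. -/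
def EventuallyPeriodic (f : ℝ → ℝ) (x : ℝ) : Prop :=
  ∃ m p : ℕ, 1 ≤ p ∧ f^[m + p] x = f^[m] x

theorem exists_rat_eq_of_int_mul_add_eq_zero {x : ℝ} {c d : ℤ} (hc : c ≠ 0)
    (h : c * x + d = 0) : ∃ r : ℚ, x = r :=
  ⟨-d / c, by
    have hc' : (c : ℝ) ≠ 0 := Int.cast_ne_zero.mpr hc
    push_cast
    field_simp
    linarith⟩

theorem mem_Ioo_of_mem_unionOfIntervals {S : Set ℤ} {y : ℝ} (hy : y ∈ UnionOfIntervals S)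
    (hint : ∀ m : ℤ, y ≠ m) : ∃ n ∈ S, y ∈ Ioo ((n : ℝ) - 1) n := by
  obtain ⟨n, hn, hlo, hhi⟩ := mem_iUnion₂.mp hy
  refine ⟨n, hn, lt_of_le_of_ne hlo ?_, lt_of_le_of_ne hhi (hint n)⟩
  exact fun h => hint (n - 1) (by push_cast; exact h.symm)

def HasExpandingIntAffineOrbit (f : ℝ → ℝ) (y : ℝ) : Prop :=
  ∀ i : ℕ, ∃ a b : ℤ, 2 ≤ |a| ∧ f (f^[i] y) = a * f^[i] y + b

theorem IsPLSystem.hasExpandingIntAffineOrbit {S : Set ℤ} {f : ℝ → ℝ} (hf : IsPLSystem S f)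
    {x : ℝ} (hxX : x ∈ UnionOfIntervals S) (hnex : NonExceptional f x) :
    HasExpandingIntAffineOrbit f x := by
  intro i
  have hmaps : MapsTo f (UnionOfIntervals S) (UnionOfIntervals S) := hf.2.1
  obtain ⟨n, hn, hmem⟩ :=
    mem_Ioo_of_mem_unionOfIntervals (hmaps.iterate i hxX) (hnex i)
  obtain ⟨a, b, ha, hab⟩ := hf.2.2 n hn
  exact ⟨a, b, ha, hab _ hmem⟩

namespace HasExpandingIntAffineOrbit

variable {f : ℝ → ℝ} {y : ℝ}

theorem iterate (h : HasExpandingIntAffineOrbit f y) (m : ℕ) :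
    HasExpandingIntAffineOrbit f (f^[m] y) := by
  intro i
  rw [← Function.iterate_add_apply]
  exact h (i + m)

theorem exists_iterate_eq (h : HasExpandingIntAffineOrbit f y) (k : ℕ) :
    ∃ a b : ℤ, 2 ^ k ≤ |a| ∧ f^[k] y = a * y + b := by
  induction k with
  | zero => exact ⟨1, 0, by norm_num, by simp⟩
  | succ k ih =>
    obtain ⟨a, b, ha, hab⟩ := ih
    obtain ⟨c, d, hc, hcd⟩ := h k
    refine ⟨c * a, c * b + d, ?_, ?_⟩
    · rw [abs_mul, pow_succ']
      exact mul_le_mul hc ha (by positivity) (abs_nonneg _)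
    · rw [Function.iterate_succ_apply', hcd, hab]
      push_cast
      ring

theorem exists_rat_eq_of_eventuallyPeriodic (h : HasExpandingIntAffineOrbit f y)
    (hper : EventuallyPeriodic f y) : ∃ r : ℚ, y = r := by
  obtain ⟨m, p, hp, hmp⟩ := hper
  obtain ⟨a, b, ha, hy⟩ := h.exists_iterate_eq m
  obtain ⟨A, B, hA, hfix⟩ := (h.iterate m).exists_iterate_eq p
  rw [← Function.iterate_add_apply, add_comm, hmp] at hfix
  have ha0 : a ≠ 0 := abs_pos.mp (lt_of_lt_of_le (by positivity) ha)
  have hA1 : A - 1 ≠ 0 := by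
    have : (2 : ℤ) ≤ 2 ^ p := le_self_pow₀ (by norm_num) (by omega)
    intro hA1
    rw [sub_eq_zero.mp hA1] at hA
    norm_num at hA
    omega
  refine exists_rat_eq_of_int_mul_add_eq_zero (mul_ne_zero hA1 ha0) (d := (A - 1) * b + B) ?_
  rw [hy] at hfix
  push_cast
  linarith

end HasExpandingIntAffineOrbit

/-- Every non-exceptional point of `X` whose orbit under `f` is eventually
periodic is rational. -/
theorem eventually_periodic_is_rational (S : Set ℤ) (f : ℝ → ℝ)
    (hf : IsPLSystem S f) (x : ℝ) (hxX : x ∈ UnionOfIntervals S)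
    (hnex : NonExceptional f x) (hper : EventuallyPeriodic f x) :
    ∃ r : ℚ, x = (r : ℝ) :=
  (hf.hasExpandingIntAffineOrbit hxX hnex).exists_rat_eq_of_eventuallyPeriodic hper
end
end

section
/- Let x = p/q ∈ X with p ∈ ℤ and q ∈ ℤ⁺ be non-exceptional and suppose the orbit of x under f is not eventually periodic. Then for every n ∈ ℤ⁺, the set {k ∈ ℕ : f^k(x) ∈ [−n, n]} has at most 4nq elements. -/
open Set Filter

noncomputable section

/-!
An integer-affine branch `y ↦ a y + b` maps `(1/q)ℤ` into itself, and a non-exceptional orbit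
only ever meets the interiors of the intervals, where `f` is such a branch. So the whole orbit of
`x = p/q` lies in `(1/q)ℤ`, which meets `[-n, n]` in `2nq + 1 ≤ 4nq` points; as the orbit is not
eventually periodic it passes through each of them at most once.
-/

open Function

namespace IsPLSystem

variable {S : Set ℤ} {f : ℝ → ℝ}

theorem iterate_mem (hf : IsPLSystem S f) {x : ℝ} (hx : x ∈ UnionOfIntervals S) (k : ℕ) :
    f^[k] x ∈ UnionOfIntervals S :=
  (MapsTo.iterate (fun _ hy => hf.2.1 _ hy) k) hx

theorem exists_affine_of_forall_ne_int (hf : IsPLSystem S f) {y : ℝ}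
    (hy : y ∈ UnionOfIntervals S) (hyZ : ∀ m : ℤ, y ≠ m) : ∃ a b : ℤ, f y = a * y + b := by
  simp only [UnionOfIntervals, mem_iUnion] at hy
  obtain ⟨n, hnS, hlo, hhi⟩ := hy
  obtain ⟨a, b, -, hab⟩ := hf.2.2 n hnS
  have hlo' : (n : ℝ) - 1 < y := hlo.lt_of_ne (by exact_mod_cast (hyZ (n - 1)).symm)
  exact ⟨a, b, hab y ⟨hlo', hhi.lt_of_ne (hyZ n)⟩⟩

theorem apply_mem_addSubgroup (hf : IsPLSystem S f) {G : AddSubgroup ℝ} (h1G : (1 : ℝ) ∈ G)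
    {y : ℝ} (hy : y ∈ UnionOfIntervals S) (hyZ : ∀ m : ℤ, y ≠ m) (hyG : y ∈ G) : f y ∈ G := by
  obtain ⟨a, b, hab⟩ := hf.exists_affine_of_forall_ne_int hy hyZ
  rw [hab, ← zsmul_eq_mul, ← mul_one (b : ℝ), ← zsmul_eq_mul]
  exact G.add_mem (G.zsmul_mem hyG a) (G.zsmul_mem h1G b)

theorem iterate_mem_addSubgroup (hf : IsPLSystem S f) {G : AddSubgroup ℝ} (h1G : (1 : ℝ) ∈ G)
    {x : ℝ} (hx : x ∈ UnionOfIntervals S) (hnex : NonExceptional f x) (hxG : x ∈ G) (k : ℕ) :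
    f^[k] x ∈ G := by
  induction k with
  | zero => exact hxG
  | succ k ih =>
    rw [iterate_succ_apply']
    exact hf.apply_mem_addSubgroup h1G (hf.iterate_mem hx k) (hnex k) ih

end IsPLSystem

theorem injective_iterate_apply_of_not_eventuallyPeriodic {f : ℝ → ℝ} {x : ℝ}
    (h : ¬ EventuallyPeriodic f x) : Injective (fun k => f^[k] x) := by
  intro k j hkj
  rcases lt_trichotomy k j with hlt | heq | hgt
  · exact absurd ⟨k, j - k, by omega, by rw [Nat.add_sub_cancel' hlt.le]; exact hkj.symm⟩ h
  · exact heq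
  · exact absurd ⟨j, k - j, by omega, by rw [Nat.add_sub_cancel' hgt.le]; exact hkj⟩ h

theorem Icc_inter_zmultiples_inv_subset (n q : ℕ) (hq : q ≠ 0) :
    Icc (-(n : ℝ)) n ∩ AddSubgroup.zmultiples (q : ℝ)⁻¹ ⊆
      (fun m : ℤ => m • (q : ℝ)⁻¹) '' ↑(Finset.Icc (-((n * q : ℕ) : ℤ)) (n * q : ℕ)) := by
  rintro _ ⟨⟨hlo, hhi⟩, m, rfl⟩
  have hq0 : (0 : ℝ) < q := by positivity
  dsimp only at hlo hhi
  rw [zsmul_eq_mul, ← div_eq_mul_inv] at hlo hhi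
  refine ⟨m, ?_, rfl⟩
  rw [Finset.coe_Icc, mem_Icc]
  constructor
  · exact_mod_cast (show -((n * q : ℕ) : ℝ) ≤ m by rw [le_div_iff₀ hq0] at hlo; push_cast; linarith)
  · exact_mod_cast (show (m : ℝ) ≤ (n * q : ℕ) by push_cast; exact (div_le_iff₀ hq0).mp hhi)

theorem finite_Icc_inter_zmultiples_inv (n q : ℕ) (hq : q ≠ 0) :
    (Icc (-(n : ℝ)) n ∩ AddSubgroup.zmultiples (q : ℝ)⁻¹).Finite ∧
      (Icc (-(n : ℝ)) n ∩ AddSubgroup.zmultiples (q : ℝ)⁻¹).ncard ≤ 2 * n * q + 1 := by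
  have hsub := Icc_inter_zmultiples_inv_subset n q hq
  have hfin := (Finset.finite_toSet (Finset.Icc (-((n * q : ℕ) : ℤ)) (n * q : ℕ))).image
    (fun m : ℤ => m • (q : ℝ)⁻¹)
  refine ⟨hfin.subset hsub, ?_⟩
  calc _ ≤ _ := ncard_le_ncard hsub hfin
    _ ≤ _ := ncard_image_le (Finset.finite_toSet _)
    _ = 2 * n * q + 1 := by rw [ncard_coe_finset, Int.card_Icc, mul_assoc]; omega

/-- If `x = p / q ∈ X` (with `q ∈ ℤ⁺`) is non-exceptional and its orbit is not
eventually periodic, then for every `n ∈ ℤ⁺` the orbit visits `[-n, n]` at most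
`4 n q` times. -/
theorem orbit_visits_bounded (S : Set ℤ) (f : ℝ → ℝ)
    (hf : IsPLSystem S f) (x : ℝ) (hxX : x ∈ UnionOfIntervals S)
    (p : ℤ) (q : ℕ) (hq : 1 ≤ q) (hxpq : x = (p : ℝ) / (q : ℝ))
    (hnex : NonExceptional f x) (hnper : ¬ EventuallyPeriodic f x) :
    ∀ n : ℕ, 1 ≤ n →
      {k : ℕ | f^[k] x ∈ Set.Icc (-(n : ℝ)) (n : ℝ)}.Finite ∧
        {k : ℕ | f^[k] x ∈ Set.Icc (-(n : ℝ)) (n : ℝ)}.ncard ≤ 4 * n * q := by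
  intro n hn
  have hq0 : (q : ℝ) ≠ 0 := by positivity
  have h1G : (1 : ℝ) ∈ AddSubgroup.zmultiples (q : ℝ)⁻¹ := ⟨q, by simp [hq0]⟩
  have hxG : x ∈ AddSubgroup.zmultiples (q : ℝ)⁻¹ :=
    ⟨p, by rw [hxpq, div_eq_mul_inv, ← zsmul_eq_mul]⟩
  have hmaps : MapsTo (fun k => f^[k] x) {k : ℕ | f^[k] x ∈ Icc (-(n : ℝ)) n}
      (Icc (-(n : ℝ)) n ∩ AddSubgroup.zmultiples (q : ℝ)⁻¹) :=
    fun k hk => ⟨hk, hf.iterate_mem_addSubgroup h1G hxX hnex hxG k⟩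
  have hinj : InjOn (fun k => f^[k] x) {k : ℕ | f^[k] x ∈ Icc (-(n : ℝ)) n} :=
    (injective_iterate_apply_of_not_eventuallyPeriodic hnper).injOn
  obtain ⟨hfin, hcard⟩ := finite_Icc_inter_zmultiples_inv n q (by omega)
  refine ⟨hfin.of_injOn hmaps hinj, ?_⟩
  calc _ ≤ _ := ncard_le_ncard_of_injOn _ hmaps hinj hfin
    _ ≤ 2 * n * q + 1 := hcard
    _ ≤ 4 * n * q := by nlinarith
end
end

section
/- Suppose the bottleneck condition holds: liminf_{N→∞} sup{ λ({x ∈ [n−1, n] ∩ X : f(x) ≤ −N or f(x) ≥ N}) : n ∈ S, 1−N ≤ n ≤ N } = 0 (with the supremum over the empty set taken to be 0). Then every non-exceptional rational x ∈ X has an eventually periodic orbit under f. -/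
open Set Filter

noncomputable section

/-- The bottleneck condition: the liminf, as `N → ∞`, of the largest measure of
the set of points of an integer interval `[n-1, n]` of the partition with
`1 - N ≤ n ≤ N` that `f` maps outside `(-N, N)`, is zero. -/
def BottleneckCondition (S : Set ℤ) (f : ℝ → ℝ) : Prop :=
  Filter.liminf (fun N : ℕ =>
    ⨆ n ∈ {n : ℤ | n ∈ S ∧ 1 - (N : ℤ) ≤ n ∧ n ≤ (N : ℤ)},
      MeasureTheory.volume {x : ℝ | x ∈ Set.Icc ((n : ℝ) - 1) (n : ℝ) ∧
        x ∈ UnionOfIntervals S ∧ (f x ≤ -(N : ℝ) ∨ (N : ℝ) ≤ f x)})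
    Filter.atTop = 0

/-!
Let `d` be the denominator of `x`. Since `x` is non-exceptional, every iterate lies in the
interior of an interval of the partition, where `f` is affine with integer coefficients, so every
iterate again lies in `(1/d)ℤ` and hence at distance at least `1/d` from the integers. Choose `N`
larger than `|x|` with bottleneck supremum below `1/d`. If an iterate `y ∈ (n-1, n) ∩ (-N, N)`
were mapped outside `(-N, N)`, then by monotonicity of `f` on `(n-1, n)` a whole subinterval of
length `1/d` on one side of `y` would be mapped outside `(-N, N)`, contradicting the choice of `N`.
So the orbit stays in the finite set `(1/d)ℤ ∩ (-N, N)`, and is therefore eventually periodic.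
-/

open MeasureTheory

lemma inv_le_abs_sub_intCast {y : ℝ} {d : ℕ} {z : ℤ} (hd : 0 < d) (hz : y * d = z) {m : ℤ}
    (hym : y ≠ m) : (d : ℝ)⁻¹ ≤ |y - m| := by
  have hd' : (0 : ℝ) < d := by exact_mod_cast hd
  have hne : z - m * d ≠ 0 := by
    intro h
    have hzm : (z : ℝ) = m * d := by exact_mod_cast sub_eq_zero.mp h
    exact hym (mul_right_cancel₀ hd'.ne' (hz.trans hzm))
  rw [inv_le_iff_one_le_mul₀ hd']
  calc (1 : ℝ) ≤ |((z - m * d : ℤ) : ℝ)| := by exact_mod_cast Int.one_le_abs hne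
    _ = |y - m| * d := by push_cast; rw [← hz, ← sub_mul, abs_mul, abs_of_pos hd']

lemma finite_setOf_mul_eq_intCast_abs_lt {d : ℕ} (hd : 0 < d) (N : ℕ) :
    {y : ℝ | (∃ z : ℤ, y * d = z) ∧ |y| < N}.Finite := by
  have hd' : (0 : ℝ) < d := by exact_mod_cast hd
  refine ((Set.finite_Ioo (-(N * d : ℤ)) (N * d)).image fun z : ℤ => (z : ℝ) / d).subset ?_
  rintro y ⟨⟨z, hz⟩, hyN⟩
  refine ⟨z, ?_, by simp only [← hz, mul_div_cancel_right₀ _ hd'.ne']⟩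
  have hzN : |(z : ℝ)| < N * d := by
    rw [← hz, abs_mul, abs_of_pos hd']
    exact mul_lt_mul_of_pos_right hyN hd'
  obtain ⟨hz₁, hz₂⟩ := abs_lt.1 hzN
  constructor
  · exact_mod_cast hz₁
  · exact_mod_cast hz₂

section EscapeFromInterval

variable {α β : Type*} [LinearOrder α] [AddCommGroup β] [LinearOrder β] [IsOrderedAddMonoid β]
  {g : α → β} {u v y : α} {N : β}

lemma MonotoneOn.Ico_subset_or_Ioc_subset_of_le_abs (hg : MonotoneOn g (Ioo u v))
    (hy : y ∈ Ioo u v) (hN : N ≤ |g y|) :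
    Ico y v ⊆ {x | N ≤ |g x|} ∨ Ioc u y ⊆ {x | N ≤ |g x|} := by
  rcases le_abs'.1 hN with h | h
  · exact Or.inr fun x hx =>
      le_abs'.2 (Or.inl ((hg (Ioc_subset_Ioo_right hy.2 hx) hy hx.2).trans h))
  · exact Or.inl fun x hx =>
      le_abs'.2 (Or.inr (h.trans (hg hy (Ico_subset_Ioo_left hy.1 hx) hx.1)))

lemma AntitoneOn.Ico_subset_or_Ioc_subset_of_le_abs (hg : AntitoneOn g (Ioo u v))
    (hy : y ∈ Ioo u v) (hN : N ≤ |g y|) :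
    Ico y v ⊆ {x | N ≤ |g x|} ∨ Ioc u y ⊆ {x | N ≤ |g x|} := by
  simpa only [abs_neg] using hg.neg.Ico_subset_or_Ioc_subset_of_le_abs hy (by rwa [abs_neg])

end EscapeFromInterval

lemma monotoneOn_or_antitoneOn_of_eqOn_affine {g : ℝ → ℝ} {s : Set ℝ} {a b : ℝ}
    (hg : EqOn g (fun x => a * x + b) s) : MonotoneOn g s ∨ AntitoneOn g s := by
  rcases le_total 0 a with ha | ha
  · exact Or.inl fun x hx y hy hxy => by rw [hg hx, hg hy]; dsimp only; nlinarith
  · exact Or.inr fun x hx y hy hxy => by rw [hg hx, hg hy]; dsimp only; nlinarith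

lemma ofReal_le_volume_setOf_le_abs {g : ℝ → ℝ} {u v y N δ : ℝ}
    (hg : MonotoneOn g (Ioo u v) ∨ AntitoneOn g (Ioo u v)) (hy : y ∈ Ioo u v)
    (hu : δ ≤ y - u) (hv : δ ≤ v - y) (hN : N ≤ |g y|) :
    ENNReal.ofReal δ ≤ volume {x ∈ Ioo u v | N ≤ |g x|} := by
  have hhalf : Ico y v ⊆ {x | N ≤ |g x|} ∨ Ioc u y ⊆ {x | N ≤ |g x|} :=
    hg.elim (·.Ico_subset_or_Ioc_subset_of_le_abs hy hN)
      (·.Ico_subset_or_Ioc_subset_of_le_abs hy hN)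
  rcases hhalf with h | h
  · calc ENNReal.ofReal δ ≤ ENNReal.ofReal (v - y) := ENNReal.ofReal_le_ofReal hv
      _ = volume (Ico y v) := Real.volume_Ico.symm
      _ ≤ _ := measure_mono fun _ hx => mem_sep (Ico_subset_Ioo_left hy.1 hx) (h hx)
  · calc ENNReal.ofReal δ ≤ ENNReal.ofReal (y - u) := ENNReal.ofReal_le_ofReal hu
      _ = volume (Ioc u y) := Real.volume_Ioc.symm
      _ ≤ _ := measure_mono fun _ hx => mem_sep (Ioc_subset_Ioo_right hy.2 hx) (h hx)

lemma EventuallyPeriodic.of_iterate_mem {f : ℝ → ℝ} {x : ℝ} {s : Set ℝ} (hs : s.Finite)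
    (h : ∀ k, f^[k] x ∈ s) : EventuallyPeriodic f x := by
  obtain ⟨i, j, hij, heq⟩ := hs.exists_lt_map_eq_of_forall_mem h
  exact ⟨i, j - i, by omega, by rw [Nat.add_sub_cancel' hij.le]; exact heq.symm⟩

section PiecewiseAffine

variable {S : Set ℤ} {f : ℝ → ℝ}

def escapeSet (S : Set ℤ) (f : ℝ → ℝ) (n : ℤ) (N : ℝ) : Set ℝ :=
  {x | x ∈ Icc ((n : ℝ) - 1) n ∧ x ∈ UnionOfIntervals S ∧ (f x ≤ -N ∨ N ≤ f x)}

def bottleneckSup (S : Set ℤ) (f : ℝ → ℝ) (N : ℕ) : ENNReal :=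
  ⨆ n ∈ {n : ℤ | n ∈ S ∧ 1 - (N : ℤ) ≤ n ∧ n ≤ (N : ℤ)}, volume (escapeSet S f n N)

lemma BottleneckCondition.exists_bottleneckSup_lt (hbot : BottleneckCondition S f)
    {ε : ENNReal} (hε : 0 < ε) (N₀ : ℕ) : ∃ N ≥ N₀, bottleneckSup S f N < ε := by
  have hlim : liminf (bottleneckSup S f) atTop < ε := by
    rwa [show liminf (bottleneckSup S f) atTop = 0 from hbot]
  exact frequently_atTop.1 (frequently_lt_of_liminf_lt isCobounded_ge_of_top hlim) N₀

lemma volume_escapeSet_le_bottleneckSup {n : ℤ} {N : ℕ} (hn : n ∈ S)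
    (hlow : 1 - (N : ℤ) ≤ n) (hhigh : n ≤ N) : volume (escapeSet S f n N) ≤ bottleneckSup S f N :=
  le_biSup (fun n => volume (escapeSet S f n N)) ⟨hn, hlow, hhigh⟩

lemma setOf_le_abs_subset_escapeSet {n : ℤ} (hn : n ∈ S) (N : ℝ) :
    {x ∈ Ioo ((n : ℝ) - 1) n | N ≤ |f x|} ⊆ escapeSet S f n N :=
  fun _ hx =>
    ⟨Ioo_subset_Icc_self hx.1, mem_biUnion hn (Ioo_subset_Icc_self hx.1), le_abs'.1 hx.2⟩

lemma exists_mem_Ioo_of_mem_unionOfIntervals {y : ℝ} (hy : y ∈ UnionOfIntervals S)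
    (hint : ∀ m : ℤ, y ≠ m) : ∃ n ∈ S, y ∈ Ioo ((n : ℝ) - 1) n := by
  obtain ⟨n, hn, hlow, hhigh⟩ := mem_iUnion₂.1 hy
  have hne : ((n - 1 : ℤ) : ℝ) ≠ y := (hint (n - 1)).symm
  push_cast at hne
  exact ⟨n, hn, hlow.lt_of_ne hne, hhigh.lt_of_ne (hint n)⟩

def latticeBox (S : Set ℤ) (d N : ℕ) : Set ℝ :=
  {y | y ∈ UnionOfIntervals S ∧ (∃ z : ℤ, y * d = z) ∧ |y| < N}

lemma finite_latticeBox {d : ℕ} (hd : 0 < d) (N : ℕ) : (latticeBox S d N).Finite :=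
  (finite_setOf_mul_eq_intCast_abs_lt hd N).subset fun _ hy => hy.2

lemma IsPLSystem.map_mem_latticeBox (hf : IsPLSystem S f) {d N : ℕ} (hd : 0 < d)
    (hN : bottleneckSup S f N < ENNReal.ofReal (d : ℝ)⁻¹) {y : ℝ} (hy : y ∈ latticeBox S d N)
    (hint : ∀ m : ℤ, y ≠ m) : f y ∈ latticeBox S d N := by
  obtain ⟨hyX, ⟨z, hz⟩, hyN⟩ := hy
  obtain ⟨n, hn, hyI⟩ := exists_mem_Ioo_of_mem_unionOfIntervals hyX hint
  obtain ⟨a, b, -, hab⟩ := hf.2.2 n hn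
  refine ⟨hf.2.1 y hyX, ⟨a * z + b * d, ?_⟩, ?_⟩
  · rw [hab y hyI]
    push_cast
    linear_combination (a : ℝ) * hz
  by_contra! hesc
  have hleft : (d : ℝ)⁻¹ ≤ y - (n - 1) := by
    have h := inv_le_abs_sub_intCast hd hz (m := n - 1) (by push_cast; exact hyI.1.ne')
    rwa [Int.cast_sub, Int.cast_one, abs_of_pos (by linarith [hyI.1])] at h
  have hright : (d : ℝ)⁻¹ ≤ n - y := by
    have h := inv_le_abs_sub_intCast hd hz hyI.2.ne
    rwa [abs_sub_comm, abs_of_pos (by linarith [hyI.2])] at h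
  obtain ⟨hyN₁, hyN₂⟩ := abs_lt.1 hyN
  have hlow : 1 - (N : ℤ) ≤ n := by
    have : -(N : ℝ) < n := by linarith [hyI.2]
    have : -(N : ℤ) < n := by exact_mod_cast this
    omega
  have hhigh : n ≤ (N : ℤ) := by
    have : (n : ℝ) - 1 < N := by linarith [hyI.1]
    have : n - 1 < (N : ℤ) := by exact_mod_cast this
    omega
  have hvol := calc
    ENNReal.ofReal (d : ℝ)⁻¹ ≤ volume {x ∈ Ioo ((n : ℝ) - 1) n | (N : ℝ) ≤ |f x|} :=
      ofReal_le_volume_setOf_le_abs (monotoneOn_or_antitoneOn_of_eqOn_affine hab) hyI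
        hleft hright hesc
    _ ≤ volume (escapeSet S f n N) := measure_mono (setOf_le_abs_subset_escapeSet hn _)
    _ ≤ bottleneckSup S f N := volume_escapeSet_le_bottleneckSup hn hlow hhigh
  exact (hvol.trans_lt hN).false

lemma IsPLSystem.iterate_mem_latticeBox (hf : IsPLSystem S f) {d N : ℕ} (hd : 0 < d)
    (hN : bottleneckSup S f N < ENNReal.ofReal (d : ℝ)⁻¹) {x : ℝ} (hx : x ∈ latticeBox S d N)
    (hnex : NonExceptional f x) (k : ℕ) : f^[k] x ∈ latticeBox S d N := by
  induction k with
  | zero => exact hx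
  | succ k ih =>
    rw [Function.iterate_succ_apply']
    exact hf.map_mem_latticeBox hd hN ih (hnex k)

end PiecewiseAffine

/-- If the bottleneck condition holds, then every non-exceptional rational
point of `X` has an eventually periodic orbit under `f`. -/
theorem bottleneck_implies_rationals_eventually_periodic (S : Set ℤ)
    (f : ℝ → ℝ) (hf : IsPLSystem S f) (hbot : BottleneckCondition S f)
    (x : ℝ) (hxX : x ∈ UnionOfIntervals S) (hnex : NonExceptional f x)
    (hrat : ∃ r : ℚ, x = (r : ℝ)) :
    EventuallyPeriodic f x := by
  obtain ⟨r, rfl⟩ := hrat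
  obtain ⟨N, hN_ge, hN⟩ := hbot.exists_bottleneckSup_lt
    (ENNReal.ofReal_pos.2 (by positivity : (0 : ℝ) < (r.den : ℝ)⁻¹)) (⌈|(r : ℝ)|⌉₊ + 1)
  have hx : (r : ℝ) ∈ latticeBox S r.den N :=
    ⟨hxX, ⟨r.num, by exact_mod_cast Rat.mul_den_eq_num r⟩, Nat.lt_of_ceil_lt (by omega)⟩
  exact .of_iterate_mem (finite_latticeBox r.pos N)
    (hf.iterate_mem_latticeBox r.pos hN hx hnex)
end
end

section
/- Let a_0 ∈ ℤ, let (b_i)_{i≥1} be a sequence of integers with b_i ≥ 2, and let (a_i)_{i≥1} be a sequence of integers with 0 ≤ a_i ≤ b_i − 1 for all i. Set x = a_0 + Σ_{i=1}^∞ a_i/(b_1·b_2⋯b_i). If a_i < b_i − 1 for infinitely many i, and there exists a strictly increasing sequence (i_n) of indices such that a_{i_n}/b_{i_n} → 1 as n → ∞, then x is irrational. -/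
/-!
Let `rₙ = b₁ ⋯ bₙ · ∑_{i > n} aᵢ / (b₁ ⋯ bᵢ)`. Comparing digit by digit with the telescoping
series `∑_{i > n} (bᵢ - 1) / (b₁ ⋯ bᵢ) = 1 / (b₁ ⋯ bₙ)` of maximal digits gives `0 ≤ rₙ < 1`, the strict
inequality because infinitely many digits are not maximal. Moreover
`r_{n+1} = b_{n+1} rₙ - a_{n+1}`, so `a_{n+1} / b_{n+1} ≤ rₙ`. If `x = p / q`, this recurrence
keeps `q rₙ` an integer, so `rₙ ≤ 1 - 1/q` for every `n`, and `a_{iₙ} / b_{iₙ}` cannot tend to `1`.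
-/

open Filter Topology

theorem hasSum_sub_succ_of_antitone {f : ℕ → ℝ} (hf : Antitone f)
    (hlim : Tendsto f atTop (𝓝 0)) : HasSum (fun i => f i - f (i + 1)) (f 0) := by
  rw [hasSum_iff_tendsto_nat_of_nonneg fun i => sub_nonneg.mpr (hf i.le_succ)]
  simp only [Finset.sum_range_sub']
  simpa using tendsto_const_nhds.sub hlim

theorem le_one_sub_inv_of_natCast_mul_eq_intCast {r : ℝ} {d : ℕ} {K : ℤ} (hd : 0 < d)
    (hK : d * r = K) (hr : r < 1) : r ≤ 1 - 1 / d := by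
  have hd' : (0 : ℝ) < d := by exact_mod_cast hd
  have hKd : K < d := by
    have : (K : ℝ) < d := by rw [← hK]; nlinarith
    exact_mod_cast this
  have : (K : ℝ) ≤ d - 1 := by exact_mod_cast Int.le_sub_one_of_lt hKd
  calc r = K / d := by rw [eq_div_iff hd'.ne']; linarith
    _ ≤ (d - 1) / d := by gcongr
    _ = 1 - 1 / d := by field_simp

namespace CantorSeries

noncomputable def denom (b : ℕ → ℤ) (n : ℕ) : ℝ := ∏ j ∈ Finset.Icc 1 n, (b j : ℝ)

noncomputable def term (a b : ℕ → ℤ) (i : ℕ) : ℝ := a (i + 1) / denom b (i + 1)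

noncomputable def remainder (a b : ℕ → ℤ) (n : ℕ) : ℝ := denom b n * ∑' i, term a b (i + n)

variable {a b : ℕ → ℤ}

@[simp]
theorem denom_zero : denom b 0 = 1 := by simp [denom]

theorem denom_succ (n : ℕ) : denom b (n + 1) = denom b n * b (n + 1) :=
  Finset.prod_Icc_succ_top (Nat.le_add_left 1 n) _

theorem two_le_base (hb : ∀ i, 1 ≤ i → 2 ≤ b i) (k : ℕ) : (2 : ℝ) ≤ b (k + 1) := by
  exact_mod_cast hb (k + 1) (Nat.le_add_left 1 k)

theorem two_pow_le_denom (hb : ∀ i, 1 ≤ i → 2 ≤ b i) (n : ℕ) : 2 ^ n ≤ denom b n := by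
  induction n with
  | zero => simp
  | succ n ih =>
    rw [pow_succ, denom_succ]
    exact mul_le_mul ih (two_le_base hb n) two_pos.le ((pow_pos two_pos n).le.trans ih)

theorem denom_pos (hb : ∀ i, 1 ≤ i → 2 ≤ b i) (n : ℕ) : 0 < denom b n :=
  (pow_pos two_pos n).trans_le (two_pow_le_denom hb n)

theorem tendsto_denom_atTop (hb : ∀ i, 1 ≤ i → 2 ≤ b i) : Tendsto (denom b) atTop atTop :=
  tendsto_atTop_mono (two_pow_le_denom hb) (tendsto_pow_atTop_atTop_of_one_lt one_lt_two)

theorem hasSum_inv_denom_sub (hb : ∀ i, 1 ≤ i → 2 ≤ b i) (n : ℕ) :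
    HasSum (fun i => 1 / denom b (i + n) - 1 / denom b (i + n + 1)) (1 / denom b n) := by
  have := hasSum_sub_succ_of_antitone (f := fun i => 1 / denom b (n + i)) ?_ ?_
  · simpa only [add_comm n, add_right_comm _ n 1, zero_add] using this
  · refine antitone_nat_of_succ_le fun i => one_div_le_one_div_of_le (denom_pos hb _) ?_
    rw [← add_assoc, denom_succ]
    exact le_mul_of_one_le_right (denom_pos hb _).le (one_le_two.trans (two_le_base hb _))
  · simp only [one_div]
    exact ((tendsto_denom_atTop hb).comp
      (tendsto_atTop_mono (Nat.le_add_left · n) tendsto_id)).inv_tendsto_atTop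

theorem inv_denom_sub_inv_denom_succ (hb : ∀ i, 1 ≤ i → 2 ≤ b i) (k : ℕ) :
    1 / denom b k - 1 / denom b (k + 1) = (b (k + 1) - 1) / denom b (k + 1) := by
  have := two_le_base hb k
  rw [denom_succ]
  field_simp [(denom_pos hb k).ne']

theorem term_nonneg (hb : ∀ i, 1 ≤ i → 2 ≤ b i) {k : ℕ} (h : 0 ≤ a (k + 1)) :
    0 ≤ term a b k :=
  div_nonneg (by exact_mod_cast h) (denom_pos hb _).le

theorem term_le_inv_denom_sub (hb : ∀ i, 1 ≤ i → 2 ≤ b i) {k : ℕ}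
    (h : a (k + 1) ≤ b (k + 1) - 1) :
    term a b k ≤ 1 / denom b k - 1 / denom b (k + 1) := by
  rw [inv_denom_sub_inv_denom_succ hb]
  exact div_le_div_of_nonneg_right (by exact_mod_cast h) (denom_pos hb _).le

theorem term_lt_inv_denom_sub (hb : ∀ i, 1 ≤ i → 2 ≤ b i) {k : ℕ}
    (h : a (k + 1) < b (k + 1) - 1) :
    term a b k < 1 / denom b k - 1 / denom b (k + 1) := by
  rw [inv_denom_sub_inv_denom_succ hb]
  exact div_lt_div_of_pos_right (by exact_mod_cast h) (denom_pos hb _)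

theorem summable_term (hb : ∀ i, 1 ≤ i → 2 ≤ b i)
    (ha : ∀ i, 1 ≤ i → 0 ≤ a i ∧ a i ≤ b i - 1) : Summable (term a b) :=
  (hasSum_inv_denom_sub hb 0).summable.of_nonneg_of_le
    (fun k => term_nonneg hb (ha _ (Nat.le_add_left 1 k)).1)
    (fun k => term_le_inv_denom_sub hb (ha _ (Nat.le_add_left 1 k)).2)

theorem remainder_zero : remainder a b 0 = ∑' i, term a b i := by
  simp [remainder]

theorem remainder_nonneg (hb : ∀ i, 1 ≤ i → 2 ≤ b i)
    (ha : ∀ i, 1 ≤ i → 0 ≤ a i ∧ a i ≤ b i - 1) (n : ℕ) : 0 ≤ remainder a b n :=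
  mul_nonneg (denom_pos hb n).le
    (tsum_nonneg fun _ => term_nonneg hb (ha _ (Nat.le_add_left 1 _)).1)

theorem remainder_lt_one (hb : ∀ i, 1 ≤ i → 2 ≤ b i)
    (ha : ∀ i, 1 ≤ i → 0 ≤ a i ∧ a i ≤ b i - 1)
    (hinf : {i : ℕ | 1 ≤ i ∧ a i < b i - 1}.Infinite)
    (n : ℕ) : remainder a b n < 1 := by
  obtain ⟨k, ⟨-, hk⟩, hnk⟩ := hinf.exists_gt n
  obtain ⟨j, rfl⟩ : ∃ j, k = j + n + 1 := ⟨k - n - 1, by omega⟩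
  have htail : ∑' i, term a b (i + n) < 1 / denom b n :=
    Summable.tsum_lt_tsum_of_nonneg (f := fun i => term a b (i + n)) (i := j)
      (fun i => term_nonneg hb (ha _ (Nat.le_add_left 1 _)).1)
      (fun i => term_le_inv_denom_sub hb (ha _ (Nat.le_add_left 1 _)).2)
      (term_lt_inv_denom_sub hb hk) (hasSum_inv_denom_sub hb n).summable
    |>.trans_eq (hasSum_inv_denom_sub hb n).tsum_eq
  rw [remainder, ← mul_one_div_cancel (denom_pos hb n).ne']
  exact mul_lt_mul_of_pos_left htail (denom_pos hb n)

theorem remainder_succ (hb : ∀ i, 1 ≤ i → 2 ≤ b i)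
    (ha : ∀ i, 1 ≤ i → 0 ≤ a i ∧ a i ≤ b i - 1) (n : ℕ) :
    remainder a b (n + 1) = b (n + 1) * remainder a b n - a (n + 1) := by
  have hsplit : ∑' i, term a b (i + n) = term a b n + ∑' i, term a b (i + (n + 1)) := by
    rw [((summable_nat_add_iff n).mpr (summable_term hb ha)).tsum_eq_zero_add]
    simp only [zero_add, add_right_comm _ 1 n]
    rfl
  have := two_le_base hb n
  rw [remainder, remainder, hsplit, term, denom_succ]
  field_simp [(denom_pos hb n).ne']
  ring

theorem div_le_remainder (hb : ∀ i, 1 ≤ i → 2 ≤ b i)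
    (ha : ∀ i, 1 ≤ i → 0 ≤ a i ∧ a i ≤ b i - 1) (n : ℕ) :
    (a (n + 1) : ℝ) / b (n + 1) ≤ remainder a b n := by
  have := remainder_nonneg hb ha (n + 1)
  rw [remainder_succ hb ha] at this
  rw [div_le_iff₀' (two_pos.trans_le (two_le_base hb n))]
  linarith

theorem exists_int_den_mul_remainder (hb : ∀ i, 1 ≤ i → 2 ≤ b i)
    (ha : ∀ i, 1 ≤ i → 0 ≤ a i ∧ a i ≤ b i - 1) {q : ℚ}
    (hq : (q : ℝ) = a 0 + remainder a b 0)
    (n : ℕ) : ∃ K : ℤ, q.den * remainder a b n = K := by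
  induction n with
  | zero =>
    refine ⟨q.num - q.den * a 0, ?_⟩
    have : (q.den : ℝ) ≠ 0 := by positivity
    rw [eq_sub_of_add_eq' hq.symm, Rat.cast_def]
    push_cast
    field_simp
  | succ n ih =>
    obtain ⟨K, hK⟩ := ih
    refine ⟨b (n + 1) * K - q.den * a (n + 1), ?_⟩
    rw [remainder_succ hb ha]
    push_cast
    linear_combination (b (n + 1) : ℝ) * hK

end CantorSeries

open CantorSeries

theorem cantor_series_irrational_of_ratio_tendsto_one_general
    (a b : ℕ → ℤ)
    (hb : ∀ i : ℕ, 1 ≤ i → 2 ≤ b i)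
    (ha : ∀ i : ℕ, 1 ≤ i → 0 ≤ a i ∧ a i ≤ b i - 1)
    (x : ℝ)
    (hx : x = (a 0 : ℝ) +
      ∑' i : ℕ, (a (i + 1) : ℝ) / ∏ j ∈ Finset.Icc 1 (i + 1), (b j : ℝ))
    (hinf : {i : ℕ | 1 ≤ i ∧ a i < b i - 1}.Infinite)
    (idx : ℕ → ℕ) (hidx1 : ∀ n : ℕ, 1 ≤ idx n)
    (hlim : Filter.Tendsto (fun n : ℕ => (a (idx n) : ℝ) / (b (idx n) : ℝ))
      Filter.atTop (nhds 1)) :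
    Irrational x := by
  rintro ⟨q, hq⟩
  have hq0 : (q : ℝ) = a 0 + remainder a b 0 := by rw [hq, hx, remainder_zero]; rfl
  have hrem (n : ℕ) : remainder a b n ≤ 1 - 1 / q.den := by
    obtain ⟨K, hK⟩ := exists_int_den_mul_remainder hb ha hq0 n
    exact le_one_sub_inv_of_natCast_mul_eq_intCast q.pos hK (remainder_lt_one hb ha hinf n)
  have hratio (n : ℕ) : (a (idx n) : ℝ) / b (idx n) ≤ 1 - 1 / q.den := by
    obtain ⟨m, hm⟩ := Nat.exists_eq_add_of_le' (hidx1 n)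
    rw [hm]
    exact (div_le_remainder hb ha m).trans (hrem m)
  have hlimit := le_of_tendsto' hlim hratio
  have : (0 : ℝ) < 1 / q.den := by positivity
  linarith

/-- Oppenheim's criterion: a Cantor series
`x = a₀ + ∑_{i≥1} a_i / (b₁ ⋯ b_i)` with integer digits `0 ≤ a_i ≤ b_i - 1` and
integer bases `b_i ≥ 2` is irrational provided that `a_i < b_i - 1` infinitely
often and `a_{iₙ} / b_{iₙ} → 1` along some strictly increasing sequence of
indices `(iₙ)`. -/
theorem cantor_series_irrational_of_ratio_tendsto_one
    (a b : ℕ → ℤ)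
    (hb : ∀ i : ℕ, 1 ≤ i → 2 ≤ b i)
    (ha : ∀ i : ℕ, 1 ≤ i → 0 ≤ a i ∧ a i ≤ b i - 1)
    (x : ℝ)
    (hx : x = (a 0 : ℝ) +
      ∑' i : ℕ, (a (i + 1) : ℝ) / ∏ j ∈ Finset.Icc 1 (i + 1), (b j : ℝ))
    (hinf : {i : ℕ | 1 ≤ i ∧ a i < b i - 1}.Infinite)
    (idx : ℕ → ℕ) (hidx1 : ∀ n : ℕ, 1 ≤ idx n) (hmono : StrictMono idx)
    (hlim : Filter.Tendsto (fun n : ℕ => (a (idx n) : ℝ) / (b (idx n) : ℝ))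
      Filter.atTop (nhds 1)) :
    Irrational x :=
  cantor_series_irrational_of_ratio_tendsto_one_general a b hb ha x hx hinf idx hidx1 hlim
end

section
/- Let a_0 ∈ ℤ, let (b_i)_{i≥1} be a sequence of integers with b_i ≥ 2, and let (a_i)_{i≥1} be a sequence of integers with 0 ≤ a_i ≤ b_i − 1 for all i. Set x = a_0 + Σ_{i=1}^∞ a_i/(b_1·b_2⋯b_i). If a_i > 0 for infinitely many i, and there exists a strictly increasing sequence (i_n) of indices such that a_{i_n}/b_{i_n} → 0 and b_{i_n} → ∞ as n → ∞, then x is irrational. -/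
/-!
Let `r_n = ∑_{i ≥ 0} a_{n+i} / (b_n ⋯ b_{n+i})` be the tails of the Cantor series. The digit
bounds give `0 < r_n ≤ 1` (positivity because infinitely many digits are nonzero) and
`b_n r_n = a_n + r_{n+1}`, so `r_n ≤ (a_n + 1) / b_n`. If the series were a rational `p / q`,
the recursion would make every `q r_n` an integer, hence `r_n ≥ 1 / q` for all `n`; but along
the indices where `a_n / b_n → 0` and `b_n → ∞` the bound `(a_n + 1) / b_n` tends to `0`.
-/

open Filter Finset

noncomputable def cantorSeries (a b : ℕ → ℤ) : ℝ :=
  ∑' i, (a i : ℝ) / ∏ j ∈ range (i + 1), (b j : ℝ)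

noncomputable def cantorTail (a b : ℕ → ℤ) (n : ℕ) : ℝ :=
  cantorSeries (fun i => a (i + n)) (fun i => b (i + n))

def IsCantorDigits (a b : ℕ → ℤ) : Prop :=
  ∀ i, 0 ≤ a i ∧ a i < b i

namespace CantorSeries

variable {a b : ℕ → ℤ}

lemma _root_.IsCantorDigits.shift (hab : IsCantorDigits a b) (n : ℕ) :
    IsCantorDigits (fun i => a (i + n)) (fun i => b (i + n)) :=
  fun i => hab (i + n)

lemma base_pos (hab : IsCantorDigits a b) (i : ℕ) : (0 : ℝ) < b i := by
  exact_mod_cast (hab i).1.trans_lt (hab i).2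

lemma prod_range_base_pos (hab : IsCantorDigits a b) (n : ℕ) :
    0 < ∏ j ∈ range n, (b j : ℝ) :=
  prod_pos fun j _ => base_pos hab j

lemma term_nonneg_s19 (hab : IsCantorDigits a b) (i : ℕ) :
    0 ≤ (a i : ℝ) / ∏ j ∈ range (i + 1), (b j : ℝ) :=
  div_nonneg (Int.cast_nonneg (hab i).1) (prod_range_base_pos hab _).le

lemma sum_range_le_one_sub (hab : IsCantorDigits a b) (N : ℕ) :
    ∑ i ∈ range N, (a i : ℝ) / ∏ j ∈ range (i + 1), (b j : ℝ) ≤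
      1 - 1 / ∏ j ∈ range N, (b j : ℝ) := by
  induction N with
  | zero => simp
  | succ N ih =>
    set P := ∏ j ∈ range N, (b j : ℝ)
    have hP : 0 < P := prod_range_base_pos hab N
    have hbN := base_pos hab N
    have hdigit : (a N : ℝ) ≤ b N - 1 := by exact_mod_cast Int.le_sub_one_of_lt (hab N).2
    have hterm : (a N : ℝ) / (P * b N) ≤ 1 / P - 1 / (P * b N) :=
      calc (a N : ℝ) / (P * b N) ≤ (b N - 1) / (P * b N) := by gcongr
        _ = 1 / P - 1 / (P * b N) := by field_simp
    rw [sum_range_succ, prod_range_succ]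
    linarith

lemma sum_range_le_one (hab : IsCantorDigits a b) (N : ℕ) :
    ∑ i ∈ range N, (a i : ℝ) / ∏ j ∈ range (i + 1), (b j : ℝ) ≤ 1 :=
  (sum_range_le_one_sub hab N).trans (sub_le_self _ (one_div_pos.2 (prod_range_base_pos hab N)).le)

lemma summable_term_s19 (hab : IsCantorDigits a b) :
    Summable fun i => (a i : ℝ) / ∏ j ∈ range (i + 1), (b j : ℝ) :=
  summable_of_sum_range_le (term_nonneg_s19 hab) (sum_range_le_one hab)

lemma cantorSeries_le_one (hab : IsCantorDigits a b) : cantorSeries a b ≤ 1 :=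
  Real.tsum_le_of_sum_range_le (term_nonneg_s19 hab) (sum_range_le_one hab)

lemma cantorSeries_pos (hab : IsCantorDigits a b) {i : ℕ} (hi : 0 < a i) :
    0 < cantorSeries a b :=
  (summable_term_s19 hab).tsum_pos (term_nonneg_s19 hab) i
    (div_pos (Int.cast_pos.2 hi) (prod_range_base_pos hab _))

lemma mul_cantorSeries (hab : IsCantorDigits a b) :
    b 0 * cantorSeries a b = a 0 + cantorSeries (fun i => a (i + 1)) (fun i => b (i + 1)) := by
  rw [cantorSeries, (summable_term_s19 hab).tsum_eq_zero_add, mul_add, cantorSeries, ← tsum_mul_left]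
  congr 1
  · rw [zero_add, range_one, prod_singleton]
    field_simp [(base_pos hab 0).ne']
  · congr 1
    funext i
    rw [prod_range_succ']
    field_simp [(base_pos hab 0).ne']

lemma cantorTail_zero : cantorTail a b 0 = cantorSeries a b := rfl

lemma mul_cantorTail (hab : IsCantorDigits a b) (n : ℕ) :
    b n * cantorTail a b n = a n + cantorTail a b (n + 1) := by
  have := mul_cantorSeries (hab.shift n)
  simp only [zero_add, add_right_comm _ 1 n] at this
  exact this

lemma cantorTail_pos (hab : IsCantorDigits a b) (hinf : {i | 0 < a i}.Infinite) (n : ℕ) :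
    0 < cantorTail a b n := by
  obtain ⟨i, hi, hni⟩ := hinf.exists_gt n
  exact cantorSeries_pos (hab.shift n) (i := i - n) (by rwa [Nat.sub_add_cancel hni.le])

lemma cantorTail_le (hab : IsCantorDigits a b) (n : ℕ) :
    cantorTail a b n ≤ ((a n : ℝ) + 1) / b n := by
  rw [le_div_iff₀ (base_pos hab n), mul_comm, mul_cantorTail hab]
  have : cantorTail a b (n + 1) ≤ 1 := cantorSeries_le_one (hab.shift (n + 1))
  linarith

lemma exists_intCast_eq_mul_of_succ_eq {t : ℕ → ℝ} (ht : ∀ n, t (n + 1) = b n * t n - a n)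
    {q : ℤ} (h0 : ∃ z : ℤ, q * t 0 = z) (n : ℕ) : ∃ z : ℤ, q * t n = z := by
  induction n with
  | zero => exact h0
  | succ n ih =>
    obtain ⟨z, hz⟩ := ih
    exact ⟨b n * z - q * a n, by rw [ht, mul_sub, mul_left_comm, hz]; push_cast; ring⟩

lemma one_div_den_le_cantorTail (hab : IsCantorDigits a b) (hinf : {i | 0 < a i}.Infinite)
    {r : ℚ} (hr : cantorSeries a b = r) (n : ℕ) :
    1 / (r.den : ℝ) ≤ cantorTail a b n := by
  have hden : (0 : ℝ) < r.den := by exact_mod_cast r.pos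
  obtain ⟨z, hz⟩ := exists_intCast_eq_mul_of_succ_eq (t := cantorTail a b) (q := r.den)
    (fun n => by rw [mul_cantorTail hab]; ring)
    ⟨r.num, by rw [cantorTail_zero, hr]; exact_mod_cast r.den_mul_eq_num⟩ n
  push_cast at hz
  have hz_pos : (0 : ℝ) < z := hz ▸ mul_pos hden (cantorTail_pos hab hinf n)
  have hz_one : (1 : ℝ) ≤ z := by exact_mod_cast Int.cast_pos.1 hz_pos
  rw [div_le_iff₀ hden]
  linarith

theorem irrational_cantorSeries (hab : IsCantorDigits a b) (hinf : {i | 0 < a i}.Infinite)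
    (hsmall : ∀ ε > 0, ∃ i, ((a i : ℝ) + 1) / b i < ε) : Irrational (cantorSeries a b) := by
  rintro ⟨r, hr⟩
  obtain ⟨i, hi⟩ := hsmall (1 / r.den) (by positivity)
  linarith [one_div_den_le_cantorTail hab hinf hr.symm i, cantorTail_le hab i]

end CantorSeries

theorem cantor_series_irrational_of_ratio_tendsto_zero_general
    (a b : ℕ → ℤ)
    (ha : ∀ i : ℕ, 1 ≤ i → 0 ≤ a i ∧ a i ≤ b i - 1)
    (x : ℝ)
    (hx : x = (a 0 : ℝ) +
      ∑' i : ℕ, (a (i + 1) : ℝ) / ∏ j ∈ Finset.Icc 1 (i + 1), (b j : ℝ))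
    (hinf : {i : ℕ | 1 ≤ i ∧ 0 < a i}.Infinite)
    (idx : ℕ → ℕ) (hidx1 : ∀ n : ℕ, 1 ≤ idx n)
    (hlim : Filter.Tendsto (fun n : ℕ => (a (idx n) : ℝ) / (b (idx n) : ℝ))
      Filter.atTop (nhds 0))
    (hblim : Filter.Tendsto (fun n : ℕ => (b (idx n) : ℝ))
      Filter.atTop Filter.atTop) :
    Irrational x := by
  have hx' : x = a 0 + cantorSeries (fun i => a (i + 1)) (fun i => b (i + 1)) := by
    rw [hx, cantorSeries]
    congr 1
    refine tsum_congr fun i => ?_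
    rw [range_eq_Ico, prod_Ico_add' (fun j => (b j : ℝ)), zero_add, Ico_add_one_right_eq_Icc]
  rw [hx']
  refine (CantorSeries.irrational_cantorSeries (fun i => ?_) ?_ fun ε hε => ?_).intCast_add _
  · have := ha (i + 1) (by omega)
    omega
  · refine Set.Infinite.of_image (· + 1) (hinf.mono ?_)
    rintro i ⟨hi, hai⟩
    exact ⟨i - 1, by simpa [Nat.sub_add_cancel hi] using hai, Nat.sub_add_cancel hi⟩
  · have hsmall : Tendsto (fun n => ((a (idx n) : ℝ) + 1) / b (idx n)) atTop (nhds 0) := by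
      simpa [add_div] using hlim.add hblim.inv_tendsto_atTop
    obtain ⟨n, hn⟩ := (hsmall.eventually (gt_mem_nhds hε)).exists
    exact ⟨idx n - 1, by simpa [Nat.sub_add_cancel (hidx1 n)] using hn⟩

/-- Oppenheim's criterion: a Cantor series
`x = a₀ + ∑_{i≥1} a_i / (b₁ ⋯ b_i)` with integer digits `0 ≤ a_i ≤ b_i - 1` and
integer bases `b_i ≥ 2` is irrational provided that `a_i > 0` infinitely often
and `a_{iₙ} / b_{iₙ} → 0` while `b_{iₙ} → ∞` along some strictly increasing
sequence of indices `(iₙ)`. -/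
theorem cantor_series_irrational_of_ratio_tendsto_zero
    (a b : ℕ → ℤ)
    (hb : ∀ i : ℕ, 1 ≤ i → 2 ≤ b i)
    (ha : ∀ i : ℕ, 1 ≤ i → 0 ≤ a i ∧ a i ≤ b i - 1)
    (x : ℝ)
    (hx : x = (a 0 : ℝ) +
      ∑' i : ℕ, (a (i + 1) : ℝ) / ∏ j ∈ Finset.Icc 1 (i + 1), (b j : ℝ))
    (hinf : {i : ℕ | 1 ≤ i ∧ 0 < a i}.Infinite)
    (idx : ℕ → ℕ) (hidx1 : ∀ n : ℕ, 1 ≤ idx n) (hmono : StrictMono idx)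
    (hlim : Filter.Tendsto (fun n : ℕ => (a (idx n) : ℝ) / (b (idx n) : ℝ))
      Filter.atTop (nhds 0))
    (hblim : Filter.Tendsto (fun n : ℕ => (b (idx n) : ℝ))
      Filter.atTop Filter.atTop) :
    Irrational x :=
  cantor_series_irrational_of_ratio_tendsto_zero_general a b ha x hx hinf idx hidx1 hlim hblim
end
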